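/- arXiv:1001.1389 — 14 statements merged into one kernel-verified Lean document; each statement's English description precedes it below -/
import Mathlib

section
/- Let r, s ∈ ℂ^N be linearly independent vectors and let A = r r† − s s†. Set Δ = (‖r‖² + ‖s‖²)² − 4|⟨r, s⟩|², η₁ = (‖r‖² − ‖s‖² + √Δ)/2 and η₂ = (‖r‖² − ‖s‖² − √Δ)/2. Then Δ > 0, η₁ > 0 and η₂ < 0 are eigenvalues of A, and every nonzero eigenvalue of A equals η₁ or η₂ (so A has exactly one positive and one negative eigenvalue). -/
/-!
On `span {r, s}` the operator `A = r r† - s s†` acts, in the basis `(r, s)`, by the matrix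
`M = !![‖r‖², ⟪r, s⟫; -⟪s, r⟫, -‖s‖²]`, and it vanishes on the orthogonal complement. Hence its
nonzero eigenvalues are the roots of `det (t - M) = (t - ‖r‖²) (t + ‖s‖²) + |⟪r, s⟫|²`, namely
`η₁` and `η₂`. By strict Cauchy–Schwarz, `|⟪r, s⟫|² < ‖r‖² ‖s‖²`, so the product of the roots is
negative: `Δ > (‖r‖² - ‖s‖²)² ≥ 0` and the roots have opposite signs.
-/
open scoped ComplexConjugate InnerProductSpace
open InnerProductSpace (rankOne rankOne_apply)

variable {𝕜 E : Type*} [RCLike 𝕜]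

theorem abs_sub_lt_sqrt_of_sq_lt_mul {R S C : ℝ} (h : C ^ 2 < R * S) :
    |R - S| < √((R + S) ^ 2 - 4 * C ^ 2) :=
  (Real.lt_sqrt (abs_nonneg _)).2 (by rw [sq_abs]; linarith)

theorem norm_inner_lt_mul_norm_of_linearIndependent [NormedAddCommGroup E]
    [InnerProductSpace 𝕜 E] {r s : E} (h : LinearIndependent 𝕜 ![r, s]) :
    ‖⟪r, s⟫_𝕜‖ < ‖r‖ * ‖s‖ := by
  refine (norm_inner_le_norm r s).lt_of_ne fun heq => ?_
  obtain ⟨k, -, hk⟩ :=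
    (norm_inner_eq_norm_iff (by simpa using h.ne_zero 0) (by simpa using h.ne_zero 1)).1 heq
  have := LinearIndependent.pair_iff.1 h k (-1) (by rw [hk]; module)
  exact one_ne_zero (neg_eq_zero.1 this.2)

variable [SeminormedAddCommGroup E] [InnerProductSpace 𝕜 E]

noncomputable def rankOneSubCharPoly (r s : E) (t : 𝕜) : 𝕜 :=
  (t - ‖r‖ ^ 2) * (t + ‖s‖ ^ 2) + ‖⟪r, s⟫_𝕜‖ ^ 2

theorem rankOneSubCharPoly_swap (r s : E) (t : 𝕜) :
    rankOneSubCharPoly s r (-t) = rankOneSubCharPoly r s t := by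
  rw [rankOneSubCharPoly, rankOneSubCharPoly, norm_inner_symm]
  ring

theorem rankOneSubCharPoly_eq_zero_iff {r s : E} {t : 𝕜} :
    rankOneSubCharPoly r s t = 0 ↔
      t = ((‖r‖ ^ 2 - ‖s‖ ^ 2 + √((‖r‖ ^ 2 + ‖s‖ ^ 2) ^ 2 - 4 * ‖⟪r, s⟫_𝕜‖ ^ 2)) / 2 : ℝ) ∨
      t = ((‖r‖ ^ 2 - ‖s‖ ^ 2 - √((‖r‖ ^ 2 + ‖s‖ ^ 2) ^ 2 - 4 * ‖⟪r, s⟫_𝕜‖ ^ 2)) / 2 : ℝ) := by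
  set Δ := (‖r‖ ^ 2 + ‖s‖ ^ 2) ^ 2 - 4 * ‖⟪r, s⟫_𝕜‖ ^ 2 with hΔ
  have hΔ_nonneg : 0 ≤ Δ := by
    have hCS : ‖⟪r, s⟫_𝕜‖ ^ 2 ≤ ‖r‖ ^ 2 * ‖s‖ ^ 2 := by
      rw [← mul_pow]
      exact pow_le_pow_left₀ (norm_nonneg _) (norm_inner_le_norm r s) 2
    linarith [sq_nonneg (‖r‖ ^ 2 - ‖s‖ ^ 2)]
  have hdiscrim : discrim (1 : 𝕜) (‖s‖ ^ 2 - ‖r‖ ^ 2) (‖⟪r, s⟫_𝕜‖ ^ 2 - ‖r‖ ^ 2 * ‖s‖ ^ 2)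
      = (√Δ : 𝕜) * √Δ := by
    rw [← RCLike.ofReal_mul, Real.mul_self_sqrt hΔ_nonneg, hΔ, discrim]
    push_cast
    ring
  rw [rankOneSubCharPoly, show
    (t - ‖r‖ ^ 2) * (t + ‖s‖ ^ 2) + ‖⟪r, s⟫_𝕜‖ ^ 2 = 1 * (t * t) + (‖s‖ ^ 2 - ‖r‖ ^ 2) * t
      + (‖⟪r, s⟫_𝕜‖ ^ 2 - ‖r‖ ^ 2 * ‖s‖ ^ 2) by ring, quadratic_eq_zero_iff one_ne_zero hdiscrim]
  push_cast
  ring_nf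

theorem rankOne_sub_rankOne_apply_eigenvector {r s : E} {η : 𝕜}
    (hη : rankOneSubCharPoly r s η = 0) :
    (rankOne 𝕜 r r - rankOne 𝕜 s s) ((η + ‖s‖ ^ 2) • r - conj ⟪r, s⟫_𝕜 • s) =
      η • ((η + ‖s‖ ^ 2) • r - conj ⟪r, s⟫_𝕜 • s) := by
  have hr : ⟪r, (η + ‖s‖ ^ 2) • r - conj ⟪r, s⟫_𝕜 • s⟫_𝕜 = η * (η + ‖s‖ ^ 2) := by
    rw [inner_sub_right, inner_smul_right, inner_smul_right, inner_self_eq_norm_sq_to_K,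
      mul_comm, RCLike.conj_mul]
    rw [rankOneSubCharPoly] at hη
    linear_combination -hη
  have hs : ⟪s, (η + ‖s‖ ^ 2) • r - conj ⟪r, s⟫_𝕜 • s⟫_𝕜 = η * conj ⟪r, s⟫_𝕜 := by
    rw [inner_sub_right, inner_smul_right, inner_smul_right, inner_self_eq_norm_sq_to_K,
      inner_conj_symm]
    ring
  rw [sub_apply, rankOne_apply, rankOne_apply, hr, hs]
  module

theorem exists_rankOne_sub_rankOne_apply_eq_smul_of_add_ne_zero {r s : E}
    (hrs : LinearIndependent 𝕜 ![r, s]) {η : 𝕜} (hη : rankOneSubCharPoly r s η = 0)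
    (hη_add : η + ‖s‖ ^ 2 ≠ 0) :
    ∃ x : E, x ≠ 0 ∧ (rankOne 𝕜 r r - rankOne 𝕜 s s) x = η • x := by
  refine ⟨_, fun h => hη_add ?_, rankOne_sub_rankOne_apply_eigenvector hη⟩
  exact (LinearIndependent.pair_iff.1 hrs _ (-conj ⟪r, s⟫_𝕜) (by rw [← h]; module)).1

/-- Swapping `r` and `s` negates the operator and its eigenvalues. -/
theorem exists_rankOne_sub_rankOne_apply_eq_smul_of_sub_ne_zero {r s : E}
    (hrs : LinearIndependent 𝕜 ![r, s]) {η : 𝕜} (hη : rankOneSubCharPoly r s η = 0)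
    (hη_sub : η - ‖r‖ ^ 2 ≠ 0) :
    ∃ x : E, x ≠ 0 ∧ (rankOne 𝕜 r r - rankOne 𝕜 s s) x = η • x := by
  obtain ⟨x, hx, hAx⟩ := exists_rankOne_sub_rankOne_apply_eq_smul_of_add_ne_zero
    (LinearIndependent.pair_symm_iff.1 hrs) (η := -η) (by rwa [rankOneSubCharPoly_swap])
    (by rwa [neg_add_eq_sub, ← neg_sub, neg_ne_zero])
  refine ⟨x, hx, ?_⟩
  rw [← neg_sub, neg_apply, hAx, neg_smul, neg_neg]

theorem rankOneSubCharPoly_eq_zero_of_apply_eq_smul {r s x : E} {μ : 𝕜} (hμ : μ ≠ 0)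
    (hx : x ≠ 0) (hAx : (rankOne 𝕜 r r - rankOne 𝕜 s s) x = μ • x) :
    rankOneSubCharPoly r s μ = 0 := by
  rw [sub_apply, rankOne_apply, rankOne_apply] at hAx
  set a := ⟪r, x⟫_𝕜
  set b := ⟪s, x⟫_𝕜
  have hr : μ * a = a * ‖r‖ ^ 2 - b * ⟪r, s⟫_𝕜 := by
    simpa [inner_sub_right, inner_smul_right, inner_self_eq_norm_sq_to_K] using
      congrArg (⟪r, ·⟫_𝕜) hAx.symm
  have hs : μ * b = a * conj ⟪r, s⟫_𝕜 - b * ‖s‖ ^ 2 := by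
    simpa [inner_sub_right, inner_smul_right, inner_self_eq_norm_sq_to_K] using
      congrArg (⟪s, ·⟫_𝕜) hAx.symm
  have hcc := RCLike.conj_mul ⟪r, s⟫_𝕜
  -- `(a, b)` is a kernel vector of `μ - M`, so `det (μ - M)` annihilates both coordinates.
  have ha : rankOneSubCharPoly r s μ * a = 0 := by
    rw [rankOneSubCharPoly]; linear_combination (μ + ‖s‖ ^ 2) * hr - ⟪r, s⟫_𝕜 * hs - a * hcc
  have hb : rankOneSubCharPoly r s μ * b = 0 := by
    rw [rankOneSubCharPoly]; linear_combination (μ - ‖r‖ ^ 2) * hs + conj ⟪r, s⟫_𝕜 * hr - b * hcc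
  by_contra hp
  have hμx : μ • x = 0 := by
    rw [← hAx, (mul_eq_zero.1 ha).resolve_left hp, (mul_eq_zero.1 hb).resolve_left hp,
      zero_smul, zero_smul, sub_zero]
  exact hx ((smul_eq_zero.1 hμx).resolve_left hμ)

/-- For linearly independent `r, s ∈ ℂ^N` and `A = r r† − s s†`,
with `Δ = (‖r‖² + ‖s‖²)² − 4|⟨r,s⟩|²`, `η₁ = (‖r‖² − ‖s‖² + √Δ)/2`,
`η₂ = (‖r‖² − ‖s‖² − √Δ)/2`, one has `Δ > 0`, `η₁ > 0` and `η₂ < 0` are eigenvalues of `A`,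
and every nonzero eigenvalue of `A` equals `η₁` or `η₂`. -/
theorem stmt1 {N : ℕ} (r s : EuclideanSpace ℂ (Fin N))
    (hind : LinearIndependent ℂ ![r, s])
    (A : EuclideanSpace ℂ (Fin N) → EuclideanSpace ℂ (Fin N))
    (hA : ∀ x, A x = (inner ℂ r x : ℂ) • r - (inner ℂ s x : ℂ) • s)
    (Δ η₁ η₂ : ℝ)
    (hΔ : Δ = (‖r‖ ^ 2 + ‖s‖ ^ 2) ^ 2 - 4 * ‖(inner ℂ r s : ℂ)‖ ^ 2)
    (hη₁ : η₁ = (‖r‖ ^ 2 - ‖s‖ ^ 2 + Real.sqrt Δ) / 2)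
    (hη₂ : η₂ = (‖r‖ ^ 2 - ‖s‖ ^ 2 - Real.sqrt Δ) / 2) :
    0 < Δ ∧ 0 < η₁ ∧ η₂ < 0 ∧
    (∃ x : EuclideanSpace ℂ (Fin N), x ≠ 0 ∧ A x = (η₁ : ℂ) • x) ∧
    (∃ x : EuclideanSpace ℂ (Fin N), x ≠ 0 ∧ A x = (η₂ : ℂ) • x) ∧
    ∀ lam : ℂ, lam ≠ 0 → (∃ x : EuclideanSpace ℂ (Fin N), x ≠ 0 ∧ A x = lam • x) →
      lam = (η₁ : ℂ) ∨ lam = (η₂ : ℂ) := by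
  obtain rfl : A = rankOne ℂ r r - rankOne ℂ s s := funext fun x => by simp [hA]
  subst hΔ
  have hCS : ‖⟪r, s⟫_ℂ‖ ^ 2 < ‖r‖ ^ 2 * ‖s‖ ^ 2 := by
    rw [← mul_pow]
    exact pow_lt_pow_left₀ (norm_inner_lt_mul_norm_of_linearIndependent hind) (norm_nonneg _)
      two_ne_zero
  have hgap := abs_sub_lt_sqrt_of_sq_lt_mul hCS
  have hη₁_pos : 0 < η₁ := by rw [hη₁]; linarith [(abs_lt.1 hgap).1]
  have hη₂_neg : η₂ < 0 := by rw [hη₂]; linarith [(abs_lt.1 hgap).2]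
  refine ⟨Real.sqrt_pos.1 ((abs_nonneg _).trans_lt hgap), hη₁_pos, hη₂_neg, ?_, ?_, ?_⟩
  · refine exists_rankOne_sub_rankOne_apply_eq_smul_of_add_ne_zero hind
      (rankOneSubCharPoly_eq_zero_iff.2 (.inl (by rw [hη₁]; rfl))) ?_
    rw [RCLike.ofReal_eq_complex_ofReal]
    exact_mod_cast (by positivity : η₁ + ‖s‖ ^ 2 ≠ 0)
  · refine exists_rankOne_sub_rankOne_apply_eq_smul_of_sub_ne_zero hind
      (rankOneSubCharPoly_eq_zero_iff.2 (.inr (by rw [hη₂]; rfl))) ?_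
    rw [RCLike.ofReal_eq_complex_ofReal]
    exact_mod_cast (sub_neg.2 (hη₂_neg.trans_le (sq_nonneg ‖r‖))).ne
  · rintro μ hμ ⟨x, hx, hAx⟩
    rw [hη₁, hη₂]
    exact rankOneSubCharPoly_eq_zero_iff.1 (rankOneSubCharPoly_eq_zero_of_apply_eq_smul hμ hx hAx)
end

section
/- Let d₁, d₂ ∈ ℂ^N be unit vectors, let r = |⟨d₁, d₂⟩| and let q ∈ [0, 1]. Then every unit vector z ∈ ℂ^N with |⟨d₁, z⟩|² = q satisfies |⟨d₂, z⟩|² ≤ 1 − (r√(1−q) − √((1−r²)q))². -/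
/-!
Split `d₂` and `z` into their components along the unit vector `d₁` and orthogonal to it.
The parallel parts contribute `r √q` to `⟨d₂, z⟩` and, by Cauchy–Schwarz, the orthogonal parts
(of norms `√(1 - r²)` and `√(1 - q)`) at most `√(1 - r²) √(1 - q)`. The bound then follows from
the two-squares identity `(ac + bd)² + (ad - bc)² = (a² + b²)(c² + d²)`.
-/

open scoped InnerProductSpace ComplexConjugate

section UnitVector

variable {𝕜 E : Type*} [RCLike 𝕜] [NormedAddCommGroup E] [InnerProductSpace 𝕜 E]
  {e : E} (he : ‖e‖ = 1) (x y : E)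
include he

theorem inner_eq_conj_mul_add_inner_sub_smul :
    ⟪x, y⟫_𝕜 = conj ⟪e, x⟫_𝕜 * ⟪e, y⟫_𝕜 + ⟪x - ⟪e, x⟫_𝕜 • e, y - ⟪e, y⟫_𝕜 • e⟫_𝕜 := by
  have hee : ⟪e, e⟫_𝕜 = 1 := by simp [inner_self_eq_norm_sq_to_K, he]
  simp only [inner_sub_left, inner_sub_right, inner_smul_left, inner_smul_right, hee,
    ← inner_conj_symm e x, RCLike.conj_conj]
  ring

theorem norm_sub_inner_smul_sq : ‖x - ⟪e, x⟫_𝕜 • e‖ ^ 2 = ‖x‖ ^ 2 - ‖⟪e, x⟫_𝕜‖ ^ 2 := by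
  rw [@norm_sub_sq 𝕜, inner_smul_right, ← inner_conj_symm, RCLike.conj_mul, norm_smul, he,
    RCLike.norm_conj]
  norm_cast
  ring

theorem norm_inner_le_of_norm_eq_one :
    ‖⟪x, y⟫_𝕜‖ ≤ ‖⟪e, x⟫_𝕜‖ * ‖⟪e, y⟫_𝕜‖ +
      √(‖x‖ ^ 2 - ‖⟪e, x⟫_𝕜‖ ^ 2) * √(‖y‖ ^ 2 - ‖⟪e, y⟫_𝕜‖ ^ 2) := by
  rw [inner_eq_conj_mul_add_inner_sub_smul he, ← norm_sub_inner_smul_sq he x,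
    ← norm_sub_inner_smul_sq he y, Real.sqrt_sq (norm_nonneg _), Real.sqrt_sq (norm_nonneg _)]
  calc _ ≤ ‖conj ⟪e, x⟫_𝕜 * ⟪e, y⟫_𝕜‖ + ‖⟪x - ⟪e, x⟫_𝕜 • e, y - ⟪e, y⟫_𝕜 • e⟫_𝕜‖ :=
        norm_add_le _ _
    _ ≤ _ := by
      rw [norm_mul, RCLike.norm_conj]
      gcongr
      exact norm_inner_le_norm _ _

end UnitVector

theorem sq_add_eq_one_sub_sq {r q : ℝ} (hr : r ^ 2 ≤ 1) (hq0 : 0 ≤ q) (hq1 : q ≤ 1) :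
    (r * √q + √(1 - r ^ 2) * √(1 - q)) ^ 2 = 1 - (r * √(1 - q) - √((1 - r ^ 2) * q)) ^ 2 := by
  rw [Real.sqrt_mul' _ hq0]
  have hq : √q ^ 2 = q := Real.sq_sqrt hq0
  have hq' : √(1 - q) ^ 2 = 1 - q := Real.sq_sqrt (by linarith)
  have hr' : √(1 - r ^ 2) ^ 2 = 1 - r ^ 2 := Real.sq_sqrt (by linarith)
  linear_combination hq + hq' + (√q ^ 2 + √(1 - q) ^ 2) * hr'

/-- For unit vectors `d₁, d₂ ∈ ℂ^N`, `r = |⟨d₁, d₂⟩|` and `q ∈ [0,1]`,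
every unit vector `z` with `|⟨d₁, z⟩|² = q` satisfies
`|⟨d₂, z⟩|² ≤ 1 − (r√(1−q) − √((1−r²)q))²`. -/
theorem stmt3 {N : ℕ} (d₁ d₂ : EuclideanSpace ℂ (Fin N))
    (hd₁ : ‖d₁‖ = 1) (hd₂ : ‖d₂‖ = 1)
    (r : ℝ) (hr : r = ‖(inner ℂ d₁ d₂ : ℂ)‖)
    (q : ℝ) (hq0 : 0 ≤ q) (hq1 : q ≤ 1)
    (z : EuclideanSpace ℂ (Fin N)) (hz : ‖z‖ = 1)
    (hzq : ‖(inner ℂ d₁ z : ℂ)‖ ^ 2 = q) :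
    ‖(inner ℂ d₂ z : ℂ)‖ ^ 2 ≤
      1 - (r * Real.sqrt (1 - q) - Real.sqrt ((1 - r ^ 2) * q)) ^ 2 := by
  have hr1 : r ^ 2 ≤ 1 := by
    have := norm_inner_le_norm (𝕜 := ℂ) d₁ d₂
    rw [hd₁, hd₂, one_mul, ← hr] at this
    exact pow_le_one₀ (hr ▸ norm_nonneg _) this
  have hq : ‖⟪d₁, z⟫_ℂ‖ = √q := by rw [← hzq, Real.sqrt_sq (norm_nonneg _)]
  have hsplit := norm_inner_le_of_norm_eq_one (𝕜 := ℂ) hd₁ d₂ z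
  rw [hd₂, hz, hzq, ← hr, hq, one_pow] at hsplit
  rw [← sq_add_eq_one_sub_sq hr1 hq0 hq1]
  gcongr
end

section
/- Let h, g ∈ ℂ^N, h₀, g₀ ∈ ℂ, σ > 0, and 0 ≤ P_min ≤ P₀. For P_s ∈ [P_min, P₀] define S(P_s) = sup over unit vectors x ∈ ℂ^N of [σ² + P_s|h₀|² + (P₀ − P_s)|⟨h, x⟩|²] / [σ² + P_s|g₀|² + (P₀ − P_s)|⟨g, x⟩|²]. Then sup over P_s ∈ [P_min, P₀] of S(P_s) equals max{S(P_min), S(P₀)}; that is, the optimal source power in the decode-and-forward secrecy-rate maximization with one eavesdropper is either P_min or P₀. -/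
/-!
For a fixed beamforming direction `x`, both the destination's and the eavesdropper's received
power are affine in the source power `Pₛ`, so their ratio is a linear-fractional function of `Pₛ`
with positive denominator on `[P_min, P₀]`, and such a function is bounded on an interval by its
values at the endpoints. Taking the supremum over unit vectors `x` preserves this bound, hence
`S(Pₛ) ≤ max {S(P_min), S(P₀)}`, and the maximum is attained at an endpoint.
-/

open Set

lemma min_le_add_mul_of_mem_Icc {α β u v p : ℝ} (hp : p ∈ Icc u v) :
    min (α + u * β) (α + v * β) ≤ α + p * β := by
  rcases le_total 0 β with hβ | hβ
  · exact min_le_of_left_le (by nlinarith [hp.1])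
  · exact min_le_of_right_le (by nlinarith [hp.2])

lemma div_le_max_of_mem_Icc {a b c d u v p : ℝ} (hp : p ∈ Icc u v)
    (hu : 0 < c + u * d) (hv : 0 < c + v * d) :
    (a + p * b) / (c + p * d) ≤ max ((a + u * b) / (c + u * d)) ((a + v * b) / (c + v * d)) := by
  set m := max ((a + u * b) / (c + u * d)) ((a + v * b) / (c + v * d))
  have hp_pos : 0 < c + p * d := (lt_min hu hv).trans_le (min_le_add_mul_of_mem_Icc hp)
  have hmu : a + u * b ≤ m * (c + u * d) := (div_le_iff₀ hu).1 (le_max_left _ _)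
  have hmv : a + v * b ≤ m * (c + v * d) := (div_le_iff₀ hv).1 (le_max_right _ _)
  -- `q ↦ m * (c + q * d) - (a + q * b)` is affine and nonnegative at both endpoints.
  have key : 0 ≤ (m * c - a) + p * (m * d - b) :=
    (le_min (by linarith) (by linarith)).trans (min_le_add_mul_of_mem_Icc hp)
  rw [div_le_iff₀ hp_pos]
  linarith

lemma sSup_setOf_le_max {ι : Type*} {P : ι → Prop} {F : ℝ → ι → ℝ} {p u v : ℝ}
    (hu : BddAbove {y | ∃ x, P x ∧ y = F u x}) (hv : BddAbove {y | ∃ x, P x ∧ y = F v x})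
    (hF : ∀ x, P x → F p x ≤ max (F u x) (F v x)) :
    sSup {y | ∃ x, P x ∧ y = F p x} ≤
      max (sSup {y | ∃ x, P x ∧ y = F u x}) (sSup {y | ∃ x, P x ∧ y = F v x}) := by
  by_cases hne : ∃ x, P x
  · obtain ⟨x₀, hx₀⟩ := hne
    refine csSup_le ⟨_, x₀, hx₀, rfl⟩ ?_
    rintro _ ⟨x, hx, rfl⟩
    exact (hF x hx).trans (max_le_max (le_csSup hu ⟨x, hx, rfl⟩) (le_csSup hv ⟨x, hx, rfl⟩))
  · -- all three sets are empty, and `sSup ∅ = 0` in `ℝ`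
    simp [not_exists.1 hne]

lemma sSup_setOf_eq_max {α β : Type*} [ConditionallyCompleteLinearOrder β] {s : Set α}
    {S : α → β} {u v : α} (hu : u ∈ s) (hv : v ∈ s) (hS : ∀ p ∈ s, S p ≤ max (S u) (S v)) :
    sSup {y | ∃ p ∈ s, y = S p} = max (S u) (S v) := by
  refine IsGreatest.csSup_eq ⟨?_, ?_⟩
  · rcases max_choice (S u) (S v) with h | h
    · exact ⟨u, hu, h⟩
    · exact ⟨v, hv, h⟩
  · rintro _ ⟨p, hp, rfl⟩
    exact hS p hp

section ReceivedPower

/-- `σ²` times the log argument of the rate at a node whose channels from the source and the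
relays are `c₀` and `c`, when the relays transmit `√(P₀ - Pₛ) x`. -/
noncomputable def receivedPower {N : ℕ} (σ P₀ : ℝ) (c₀ : ℂ) (c : EuclideanSpace ℂ (Fin N))
    (Ps : ℝ) (x : EuclideanSpace ℂ (Fin N)) : ℝ :=
  σ ^ 2 + Ps * ‖c₀‖ ^ 2 + (P₀ - Ps) * ‖(inner ℂ c x : ℂ)‖ ^ 2

variable {N : ℕ} (σ : ℝ) {P₀ : ℝ} (c₀ : ℂ) (c : EuclideanSpace ℂ (Fin N))

lemma receivedPower_eq_add_mul (Ps : ℝ) (x : EuclideanSpace ℂ (Fin N)) :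
    receivedPower σ P₀ c₀ c Ps x =
      (σ ^ 2 + P₀ * ‖(inner ℂ c x : ℂ)‖ ^ 2) + Ps * (‖c₀‖ ^ 2 - ‖(inner ℂ c x : ℂ)‖ ^ 2) := by
  unfold receivedPower
  ring

lemma sq_le_receivedPower {Ps : ℝ} (hPs : Ps ∈ Icc 0 P₀) (x : EuclideanSpace ℂ (Fin N)) :
    σ ^ 2 ≤ receivedPower σ P₀ c₀ c Ps x := by
  have := mul_nonneg hPs.1 (sq_nonneg ‖c₀‖)
  have := mul_nonneg (sub_nonneg.2 hPs.2) (sq_nonneg ‖(inner ℂ c x : ℂ)‖)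
  unfold receivedPower
  linarith

lemma receivedPower_pos (hσ : σ ≠ 0) {Ps : ℝ} (hPs : Ps ∈ Icc 0 P₀)
    (x : EuclideanSpace ℂ (Fin N)) : 0 < receivedPower σ P₀ c₀ c Ps x :=
  (sq_pos_iff.2 hσ).trans_le (sq_le_receivedPower σ c₀ c hPs x)

lemma receivedPower_le {Ps : ℝ} (hPs : Ps ∈ Icc 0 P₀) {x : EuclideanSpace ℂ (Fin N)}
    (hx : ‖x‖ = 1) : receivedPower σ P₀ c₀ c Ps x ≤ σ ^ 2 + P₀ * ‖c₀‖ ^ 2 + P₀ * ‖c‖ ^ 2 := by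
  have hinner : ‖(inner ℂ c x : ℂ)‖ ≤ ‖c‖ := by
    simpa [hx] using norm_inner_le_norm c x
  have h1 : Ps * ‖c₀‖ ^ 2 ≤ P₀ * ‖c₀‖ ^ 2 := by gcongr; exact hPs.2
  have h2 : (P₀ - Ps) * ‖(inner ℂ c x : ℂ)‖ ^ 2 ≤ P₀ * ‖c‖ ^ 2 := by
    gcongr <;> linarith [hPs.1, hPs.2]
  unfold receivedPower
  linarith

end ReceivedPower

section RateRatio

variable {N : ℕ} {h g : EuclideanSpace ℂ (Fin N)} {h₀ g₀ : ℂ} {σ P₀ : ℝ}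

lemma bddAbove_receivedPower_div (hσ : σ ≠ 0) {Ps : ℝ} (hPs : Ps ∈ Icc 0 P₀) :
    BddAbove {v | ∃ x : EuclideanSpace ℂ (Fin N), ‖x‖ = 1 ∧
      v = receivedPower σ P₀ h₀ h Ps x / receivedPower σ P₀ g₀ g Ps x} := by
  refine ⟨(σ ^ 2 + P₀ * ‖h₀‖ ^ 2 + P₀ * ‖h‖ ^ 2) / σ ^ 2, ?_⟩
  rintro _ ⟨x, hx, rfl⟩
  have hnum := receivedPower_le σ h₀ h hPs hx
  exact div_le_div₀ ((sq_nonneg σ).trans ((sq_le_receivedPower σ h₀ h hPs x).trans hnum)) hnum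
    (sq_pos_iff.2 hσ) (sq_le_receivedPower σ g₀ g hPs x)

lemma receivedPower_div_le_max (hσ : σ ≠ 0) {u v p : ℝ} (hu : u ∈ Icc 0 P₀) (hv : v ∈ Icc 0 P₀)
    (hp : p ∈ Icc u v) (x : EuclideanSpace ℂ (Fin N)) :
    receivedPower σ P₀ h₀ h p x / receivedPower σ P₀ g₀ g p x ≤
      max (receivedPower σ P₀ h₀ h u x / receivedPower σ P₀ g₀ g u x)
        (receivedPower σ P₀ h₀ h v x / receivedPower σ P₀ g₀ g v x) := by
  have hu_pos := receivedPower_pos σ g₀ g hσ hu x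
  have hv_pos := receivedPower_pos σ g₀ g hσ hv x
  simp only [receivedPower_eq_add_mul] at hu_pos hv_pos ⊢
  exact div_le_max_of_mem_Icc hp hu_pos hv_pos

end RateRatio

/-- In the DF secrecy-rate maximization with one eavesdropper, with
`S(Pₛ)` the optimal ratio for fixed source power `Pₛ`, the supremum of `S` over
`[P_min, P₀]` equals `max {S(P_min), S(P₀)}`: the optimal source power is an endpoint. -/
theorem stmt7 {N : ℕ} (h g : EuclideanSpace ℂ (Fin N)) (h₀ g₀ : ℂ)
    (σ Pmin P₀ : ℝ) (hσ : 0 < σ) (hPmin : 0 ≤ Pmin) (hP : Pmin ≤ P₀)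
    (S : ℝ → ℝ)
    (hS : ∀ Ps, S Ps = sSup {v : ℝ | ∃ x : EuclideanSpace ℂ (Fin N), ‖x‖ = 1 ∧
      v = (σ ^ 2 + Ps * ‖h₀‖ ^ 2 + (P₀ - Ps) * ‖(inner ℂ h x : ℂ)‖ ^ 2) /
          (σ ^ 2 + Ps * ‖g₀‖ ^ 2 + (P₀ - Ps) * ‖(inner ℂ g x : ℂ)‖ ^ 2)}) :
    sSup {v : ℝ | ∃ Ps ∈ Set.Icc Pmin P₀, v = S Ps} = max (S Pmin) (S P₀) := by
  have hPmin_mem : Pmin ∈ Icc 0 P₀ := ⟨hPmin, hP⟩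
  have hP₀_mem : P₀ ∈ Icc 0 P₀ := ⟨hPmin.trans hP, le_rfl⟩
  refine sSup_setOf_eq_max ⟨le_rfl, hP⟩ ⟨hP, le_rfl⟩ fun Ps hPs => ?_
  rw [hS Ps, hS Pmin, hS P₀]
  exact sSup_setOf_le_max (F := fun Ps x => receivedPower σ P₀ h₀ h Ps x /
      receivedPower σ P₀ g₀ g Ps x)
    (bddAbove_receivedPower_div hσ.ne' hPmin_mem) (bddAbove_receivedPower_div hσ.ne' hP₀_mem)
    fun x _ => receivedPower_div_le_max hσ.ne' hPmin_mem hP₀_mem hPs x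
end

section
/- Let η ∈ (0, 1), let α₁, α₂, α₃, α₄, P₀ > 0 with α₂ ≠ α₄, and define G_η(z) = 1 − (η√(1−z) − √((1−η²)z))² for z ∈ [0, 1]. Define u₀ = [α₁/α₃ − (2η² − 1) + √((α₁/α₃)² + 1 − 2(α₁/α₃)(2η² − 1))] / (2η√(1−η²)) and z₀ = 1/(1 + u₀²). Then there exist P_s ∈ [0, P₀] and z ∈ [0, 1] with (P₀ − P_s)(α₃ G_η(z) − α₁ z) > α₂ − α₄ if and only if α₂ < α₄, or α₂ > α₄ and P₀ (α₃ G_η(z₀) − α₁ z₀) > α₂ − α₄. -/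
set_option maxHeartbeats 800000 in
/-- Characterization of when the cooperative-jamming scheme with one
eavesdropper achieves positive secrecy rate. -/
theorem stmt8 (η α₁ α₂ α₃ α₄ P₀ : ℝ) (hη0 : 0 < η) (hη1 : η < 1)
    (hα₁ : 0 < α₁) (hα₂ : 0 < α₂) (hα₃ : 0 < α₃) (hα₄ : 0 < α₄) (hP₀ : 0 < P₀)
    (hne : α₂ ≠ α₄)
    (G : ℝ → ℝ)
    (hG : ∀ z, G z = 1 - (η * Real.sqrt (1 - z) - Real.sqrt ((1 - η ^ 2) * z)) ^ 2)
    (u₀ z₀ : ℝ)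
    (hu₀ : u₀ = (α₁ / α₃ - (2 * η ^ 2 - 1) +
        Real.sqrt ((α₁ / α₃) ^ 2 + 1 - 2 * (α₁ / α₃) * (2 * η ^ 2 - 1))) /
        (2 * η * Real.sqrt (1 - η ^ 2)))
    (hz₀ : z₀ = 1 / (1 + u₀ ^ 2)) :
    (∃ Ps ∈ Set.Icc (0 : ℝ) P₀, ∃ z ∈ Set.Icc (0 : ℝ) 1,
        α₂ - α₄ < (P₀ - Ps) * (α₃ * G z - α₁ * z)) ↔
      (α₂ < α₄ ∨ (α₄ < α₂ ∧ α₂ - α₄ < P₀ * (α₃ * G z₀ - α₁ * z₀))) := by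
  have hη2 : (0:ℝ) < 1 - η^2 := by nlinarith
  have hsqη : 0 < Real.sqrt (1 - η^2) := Real.sqrt_pos.mpr hη2
  have hη2k : (Real.sqrt (1 - η^2))^2 = 1 - η^2 := Real.sq_sqrt hη2.le
  obtain ⟨a, ha⟩ : ∃ x : ℝ, x = (2*η^2 - 1) - α₁/α₃ := ⟨_, rfl⟩
  obtain ⟨b, hb⟩ : ∃ x : ℝ, x = 2 * η * Real.sqrt (1 - η ^ 2) := ⟨_, rfl⟩
  obtain ⟨S, hSdef⟩ : ∃ x : ℝ, x = Real.sqrt (a^2 + b^2) := ⟨_, rfl⟩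
  have hbpos : 0 < b := by rw [hb]; positivity
  have hbne : b ≠ 0 := ne_of_gt hbpos
  have hb2pos : (0:ℝ) < b^2 := by positivity
  have hb2 : b^2 = 4*η^2*(1-η^2) := by
    rw [hb, mul_pow, mul_pow, Real.sq_sqrt hη2.le]; ring
  have hS2 : S^2 = a^2 + b^2 := by
    rw [hSdef]; exact Real.sq_sqrt (by positivity)
  have hSpos : 0 < S := by rw [hSdef]; exact Real.sqrt_pos.mpr (by positivity)
  have hSabs : |a| ≤ S := by
    rw [hSdef]
    have h1 : |a| = Real.sqrt (a^2) := (Real.sqrt_sq_eq_abs a).symm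
    rw [h1]
    exact Real.sqrt_le_sqrt (le_add_of_nonneg_right (sq_nonneg b))
  have haS : a ≤ S := (le_abs_self a).trans hSabs
  have hSa : a < S := by
    rcases lt_or_eq_of_le haS with h | h
    · exact h
    · exfalso; rw [h] at hS2; linarith
  have hSna : 0 ≤ S + a := by linarith [neg_abs_le a]
  have harg : (α₁ / α₃) ^ 2 + 1 - 2 * (α₁ / α₃) * (2 * η ^ 2 - 1) = a^2 + b^2 := by
    rw [ha, hb2]; ring
  have hu : u₀ = (S - a)/b := by
    rw [hu₀, harg, ← hSdef, ← hb, ha]; ring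
  have hu0pos : 0 < u₀ := by rw [hu]; exact div_pos (by linarith) hbpos
  have h1u : (0:ℝ) < 1 + u₀^2 := by positivity
  have hz0a : 0 ≤ z₀ := by rw [hz₀]; positivity
  have hz0b : z₀ ≤ 1 := by
    rw [hz₀, div_le_one h1u]; linarith [sq_nonneg u₀]
  have hsz : Real.sqrt (z₀ * (1 - z₀)) = u₀ / (1 + u₀^2) := by
    have h1 : z₀ * (1 - z₀) = (u₀ / (1 + u₀^2))^2 := by
      rw [hz₀]; field_simp; ring
    rw [h1, Real.sqrt_sq (by positivity)]
  have hα₃a : α₃ * a = α₃*(2*η^2-1) - α₁ := by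
    rw [ha]; field_simp
  -- value of α₃ G z - α₁ z
  have hfval : ∀ z : ℝ, 0 ≤ z → z ≤ 1 →
      α₃ * G z - α₁ * z = α₃*(1-η^2) + (α₃*(a*z) + α₃*(b*Real.sqrt (z*(1-z)))) := by
    intro z hz0 hz1
    have hc2 : (Real.sqrt (1 - z))^2 = 1 - z := Real.sq_sqrt (by linarith)
    have hs2 : (Real.sqrt z)^2 = z := Real.sq_sqrt hz0
    have hsplit : Real.sqrt ((1-η^2)*z) = Real.sqrt (1-η^2) * Real.sqrt z :=
      Real.sqrt_mul hη2.le z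
    have hm : Real.sqrt (z*(1-z)) = Real.sqrt z * Real.sqrt (1-z) :=
      Real.sqrt_mul hz0 _
    have hza : α₃*(a*z) = (α₃*(2*η^2-1) - α₁)*z := by
      rw [← hα₃a]; ring
    rw [hG z, hsplit, hm, hza, hb]
    set c := Real.sqrt (1 - z)
    set s := Real.sqrt z
    set k := Real.sqrt (1 - η^2)
    linear_combination (-α₃*η^2) * hc2 + (-α₃*s^2) * hη2k + (-α₃*(1-η^2)) * hs2
  -- max lemma
  have hmax : ∀ z : ℝ, 0 ≤ z → z ≤ 1 →
      a*z + b*Real.sqrt (z*(1-z)) ≤ (a+S)/2 := by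
    intro z hz0 hz1
    have hc2 : (Real.sqrt (1-z))^2 = 1 - z := Real.sq_sqrt (by linarith)
    have hs2 : (Real.sqrt z)^2 = z := Real.sq_sqrt hz0
    have hm : Real.sqrt (z*(1-z)) = Real.sqrt z * Real.sqrt (1-z) :=
      Real.sqrt_mul hz0 _
    have hp2 : (Real.sqrt (S+a))^2 = S + a := Real.sq_sqrt hSna
    have hq2 : (Real.sqrt (S-a))^2 = S - a := Real.sq_sqrt (by linarith)
    have hpq : Real.sqrt (S+a) * Real.sqrt (S-a) = b := by
      rw [← Real.sqrt_mul hSna]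
      have h1 : (S + a) * (S - a) = b^2 := by linear_combination hS2
      rw [h1, Real.sqrt_sq hbpos.le]
    have key : 0 ≤ (Real.sqrt (S+a) * Real.sqrt (1-z) - Real.sqrt (S-a) * Real.sqrt z)^2 :=
      sq_nonneg _
    have hexp : (Real.sqrt (S+a) * Real.sqrt (1-z) - Real.sqrt (S-a) * Real.sqrt z)^2
        = (S+a)*(1-z) + (S-a)*z - 2*b*(Real.sqrt z * Real.sqrt (1-z)) := by
      have h2 : (Real.sqrt (S+a) * Real.sqrt (1-z) - Real.sqrt (S-a) * Real.sqrt z)^2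
          = (Real.sqrt (S+a))^2*(Real.sqrt (1-z))^2 + (Real.sqrt (S-a))^2*(Real.sqrt z)^2
            - 2*(Real.sqrt (S+a) * Real.sqrt (S-a))*(Real.sqrt z * Real.sqrt (1-z)) := by
        ring
      rw [h2, hp2, hq2, hc2, hs2, hpq]
    rw [hm]
    linarith [key, hexp.ge, hexp.le]
  -- value at z₀
  have hbu : b * u₀ = S - a := by
    rw [hu]; field_simp
  have hu2 : u₀^2 * b^2 = (S-a)^2 := by
    rw [hu]; field_simp
  have hb2' : b^2 = S^2 - a^2 := by linarith [hS2]
  have hAb : ((1+u₀^2)*(S+a)) * b^2 = (2*S) * b^2 := by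
    linear_combination (a-S)*hb2' + (S+a)*hu2
  have hA : (1+u₀^2)*(S+a) = 2*S := mul_right_cancel₀ (pow_ne_zero 2 hbne) hAb
  have hval : a*z₀ + b*Real.sqrt (z₀*(1-z₀)) = (a+S)/2 := by
    rw [hsz, hz₀]
    have h1 : a * (1/(1+u₀^2)) + b * (u₀/(1+u₀^2)) = S / (1+u₀^2) := by
      field_simp
      linear_combination hbu
    rw [h1, div_eq_div_iff h1u.ne' (by norm_num : (2:ℝ) ≠ 0)]
    linear_combination -hA
  constructor
  · rintro ⟨Ps, ⟨hPs0, hPs1⟩, z, ⟨hz0, hz1⟩, hlt⟩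
    rcases lt_or_gt_of_ne hne with h | h
    · exact Or.inl h
    · refine Or.inr ⟨h, ?_⟩
      have hd : 0 < α₂ - α₄ := by linarith
      have hfz : 0 < α₃ * G z - α₁ * z := by
        by_contra hcon
        push_neg at hcon
        have : (P₀-Ps) * (α₃ * G z - α₁ * z) ≤ 0 :=
          mul_nonpos_of_nonneg_of_nonpos (by linarith) hcon
        linarith
      have hfcmp : α₃ * G z - α₁ * z ≤ α₃ * G z₀ - α₁ * z₀ := by
        rw [hfval z hz0 hz1, hfval z₀ hz0a hz0b]
        have h2 : a*z + b*Real.sqrt (z*(1-z)) ≤ a*z₀ + b*Real.sqrt (z₀*(1-z₀)) := by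
          rw [hval]; exact hmax z hz0 hz1
        have h3 := mul_le_mul_of_nonneg_left h2 hα₃.le
        linarith [h3]
      have e1 : (P₀-Ps) * (α₃ * G z - α₁ * z) ≤ P₀ * (α₃ * G z - α₁ * z) :=
        mul_le_mul_of_nonneg_right (by linarith) hfz.le
      have e2 : P₀ * (α₃ * G z - α₁ * z) ≤ P₀ * (α₃ * G z₀ - α₁ * z₀) :=
        mul_le_mul_of_nonneg_left hfcmp hP₀.le
      linarith
  · rintro (h | ⟨h, hlt⟩)
    · exact ⟨P₀, ⟨hP₀.le, le_rfl⟩, 0, ⟨le_rfl, zero_le_one⟩,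
        by rw [sub_self, zero_mul]; linarith⟩
    · exact ⟨0, ⟨le_rfl, hP₀.le⟩, z₀, ⟨hz0a, hz0b⟩, by rw [sub_zero]; exact hlt⟩
end

section
/- Let η ∈ (0, 1) and α₁, α₃ > 0, and define G_η(z) = 1 − (η√(1−z) − √((1−η²)z))² for z ∈ [0, 1] and K(z) = α₃ G_η(z) − α₁ z. Define u₀ = [α₁/α₃ − (2η² − 1) + √((α₁/α₃)² + 1 − 2(α₁/α₃)(2η² − 1))] / (2η√(1−η²)) and z₀ = 1/(1 + u₀²). Then z₀ ∈ (0, 1), z₀ is the unique point in (0, 1) satisfying α₃ G_η′(z) = α₁ (where G_η′ denotes the derivative of G_η), and K attains its maximum over [0, 1] at z₀. -/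
/-!
On `[0, 1]` one has `G(z) = 1 - η² + c z + s √(z(1 - z))` with `c = 2η² - 1`,
`s = 2η√(1 - η²)`, so on `(0, 1)` `G' = c + s φ` with `φ(z) = (1 - 2z) / (2√(z(1 - z)))`,
which is strictly decreasing. In the variable `z = 1 / (1 + u²)`, `u > 0`, one gets
`φ = (u² - 1) / (2u)`, and `u₀` is the positive root of `s u² - 2 (α₁/α₃ - c) u - s = 0`
(its discriminant simplifies because `c² + s² = 1`); hence `s φ(z₀) = α₁/α₃ - c`, so
`K' = α₃ s (φ - φ(z₀))` vanishes only at `z₀` and changes sign there from `+` to `-`.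
-/

open Real Set

noncomputable def sqrtMulOneSubDeriv (z : ℝ) : ℝ := (1 - 2 * z) / (2 * √(z * (1 - z)))

lemma hasDerivAt_sqrt_mul_one_sub {z : ℝ} (hz : z ∈ Ioo 0 1) :
    HasDerivAt (fun x => √(x * (1 - x))) (sqrtMulOneSubDeriv z) z := by
  have hpos : z * (1 - z) ≠ 0 := (mul_pos hz.1 (sub_pos.2 hz.2)).ne'
  have h : HasDerivAt (fun x => x * (1 - x)) (1 - 2 * z) z :=
    ((hasDerivAt_id' z).fun_mul ((hasDerivAt_id' z).const_sub 1)).congr_deriv (by ring)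
  exact h.sqrt hpos

lemma strictAntiOn_sqrtMulOneSubDeriv : StrictAntiOn sqrtMulOneSubDeriv (Ioo 0 1) := by
  rintro z₁ ⟨h₁0, h₁1⟩ z₂ ⟨h₂0, h₂1⟩ hlt
  simp only [sqrtMulOneSubDeriv, sqrt_mul h₁0.le, sqrt_mul h₂0.le]
  set A₁ := √z₁; set A₂ := √z₂; set B₁ := √(1 - z₁); set B₂ := √(1 - z₂)
  have hA₁ : 0 < A₁ := sqrt_pos.2 h₁0
  have hA₂ : 0 < A₂ := sqrt_pos.2 h₂0
  have hB₁ : 0 < B₁ := sqrt_pos.2 (by linarith)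
  have hB₂ : 0 < B₂ := sqrt_pos.2 (by linarith)
  have hA : A₁ < A₂ := sqrt_lt_sqrt h₁0.le hlt
  have hB : B₂ < B₁ := sqrt_lt_sqrt (by linarith) (by linarith)
  have hA₁sq : A₁ ^ 2 = z₁ := sq_sqrt h₁0.le
  have hA₂sq : A₂ ^ 2 = z₂ := sq_sqrt h₂0.le
  have hB₁sq : B₁ ^ 2 = 1 - z₁ := sq_sqrt (by linarith)
  have hB₂sq : B₂ ^ 2 = 1 - z₂ := sq_sqrt (by linarith)
  rw [div_lt_div_iff₀ (by positivity) (by positivity)]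
  have hcross : A₁ * B₂ < A₂ * B₁ := mul_lt_mul'' hA hB hA₁.le hB₂.le
  -- with `1 - 2z = B² - A²`, the difference of the two sides is `2 (A₂B₁ - A₁B₂)(A₁A₂ + B₁B₂)`
  have key : (B₂ ^ 2 - A₂ ^ 2) * (2 * (A₁ * B₁)) < (B₁ ^ 2 - A₁ ^ 2) * (2 * (A₂ * B₂)) := by
    nlinarith [mul_lt_mul_of_pos_right hcross (by positivity : 0 < A₁ * A₂ + B₁ * B₂)]
  rw [hA₁sq, hA₂sq, hB₁sq, hB₂sq] at key
  linarith

lemma sqrtMulOneSubDeriv_one_div_one_add_sq {u : ℝ} (hu : 0 < u) :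
    sqrtMulOneSubDeriv (1 / (1 + u ^ 2)) = (u ^ 2 - 1) / (2 * u) := by
  have h : 1 / (1 + u ^ 2) * (1 - 1 / (1 + u ^ 2)) = (u / (1 + u ^ 2)) ^ 2 := by
    field_simp; ring
  rw [sqrtMulOneSubDeriv, h, sqrt_sq (by positivity)]
  field_simp
  ring

lemma pos_and_mul_sq_sub_one_eq_of_eq {d s u : ℝ} (hs : 0 < s) (hu : u = (d + √(d ^ 2 + s ^ 2)) / s) :
    0 < u ∧ s * (u ^ 2 - 1) = 2 * d * u := by
  have hroot : √(d ^ 2 + s ^ 2) ^ 2 = d ^ 2 + s ^ 2 := sq_sqrt (by positivity)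
  have hdom : |d| < √(d ^ 2 + s ^ 2) := by
    rw [← sqrt_sq_eq_abs]; exact sqrt_lt_sqrt (sq_nonneg d) (by linarith [sq_pos_of_pos hs])
  subst hu
  constructor
  · exact div_pos (by linarith [neg_abs_le d]) hs
  · field_simp
    linear_combination hroot

lemma one_div_one_add_sq_mem_Ioo {u : ℝ} (hu : 0 < u) : 1 / (1 + u ^ 2) ∈ Ioo 0 1 :=
  ⟨by positivity, by rw [div_lt_one (by positivity)]; nlinarith⟩

lemma two_mul_mul_sqrt_one_sub_sq_pos {η : ℝ} (hη0 : 0 < η) (hη1 : η < 1) :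
    0 < 2 * η * √(1 - η ^ 2) := by
  have : 0 < 1 - η ^ 2 := by nlinarith
  positivity

lemma one_sub_sq_eq_of_mem_Icc {η z : ℝ} (hη : η ^ 2 ≤ 1) (hz : z ∈ Icc 0 1) :
    1 - (η * √(1 - z) - √((1 - η ^ 2) * z)) ^ 2
      = 1 - η ^ 2 + (2 * η ^ 2 - 1) * z + 2 * η * √(1 - η ^ 2) * √(z * (1 - z)) := by
  have h₁ : √(1 - z) ^ 2 = 1 - z := sq_sqrt (by linarith [hz.2])
  have h₂ : √z ^ 2 = z := sq_sqrt hz.1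
  have h₃ : √(1 - η ^ 2) ^ 2 = 1 - η ^ 2 := sq_sqrt (by linarith)
  rw [sqrt_mul (by linarith), sqrt_mul hz.1]
  linear_combination (-η ^ 2) * h₁ - √(1 - η ^ 2) ^ 2 * h₂ - z * h₃

lemma hasDerivAt_one_sub_sq {η z : ℝ} (hη : η ^ 2 ≤ 1) (hz : z ∈ Ioo 0 1) :
    HasDerivAt (fun x => 1 - (η * √(1 - x) - √((1 - η ^ 2) * x)) ^ 2)
      (2 * η ^ 2 - 1 + 2 * η * √(1 - η ^ 2) * sqrtMulOneSubDeriv z) z := by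
  have h : HasDerivAt
      (fun x => 1 - η ^ 2 + (2 * η ^ 2 - 1) * x + 2 * η * √(1 - η ^ 2) * √(x * (1 - x)))
      (2 * η ^ 2 - 1 + 2 * η * √(1 - η ^ 2) * sqrtMulOneSubDeriv z) z :=
    (((hasDerivAt_id' z).const_mul (2 * η ^ 2 - 1)).const_add (1 - η ^ 2)).fun_add
      ((hasDerivAt_sqrt_mul_one_sub hz).const_mul (2 * η * √(1 - η ^ 2))) |>.congr_deriv (by ring)
  refine h.congr_of_eventuallyEq ?_
  filter_upwards [Ioo_mem_nhds hz.1 hz.2] with x hx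
  exact one_sub_sq_eq_of_mem_Icc hη (Ioo_subset_Icc_self hx)

lemma one_div_one_add_sq_mem_Ioo_and_mul_sqrtMulOneSubDeriv_eq {η a u : ℝ} (hη0 : 0 < η) (hη1 : η < 1)
    (hu : u = (a - (2 * η ^ 2 - 1) + √(a ^ 2 + 1 - 2 * a * (2 * η ^ 2 - 1))) /
      (2 * η * √(1 - η ^ 2))) :
    1 / (1 + u ^ 2) ∈ Ioo 0 1 ∧
      2 * η * √(1 - η ^ 2) * sqrtMulOneSubDeriv (1 / (1 + u ^ 2)) = a - (2 * η ^ 2 - 1) := by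
  have hs := two_mul_mul_sqrt_one_sub_sq_pos hη0 hη1
  have hdisc : a ^ 2 + 1 - 2 * a * (2 * η ^ 2 - 1)
      = (a - (2 * η ^ 2 - 1)) ^ 2 + (2 * η * √(1 - η ^ 2)) ^ 2 := by
    rw [mul_pow, sq_sqrt (by nlinarith)]; ring
  obtain ⟨hu0, hroot⟩ := pos_and_mul_sq_sub_one_eq_of_eq hs (hdisc ▸ hu)
  refine ⟨one_div_one_add_sq_mem_Ioo hu0, ?_⟩
  rw [sqrtMulOneSubDeriv_one_div_one_add_sq hu0, mul_div_assoc', div_eq_iff (by positivity)]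
  linear_combination hroot

lemma isMaxOn_Icc_of_hasDerivAt_mul_sub {f φ : ℝ → ℝ} {a b x₀ c : ℝ} (hf : Continuous f)
    (hc : 0 ≤ c) (hφ : AntitoneOn φ (Ioo a b)) (hx₀ : x₀ ∈ Ioo a b)
    (hf' : ∀ x ∈ Ioo a b, HasDerivAt f (c * (φ x - φ x₀)) x) :
    IsMaxOn f (Icc a b) x₀ := by
  have hleft {x} (hx : x ∈ Ioo a x₀) : x ∈ Ioo a b := ⟨hx.1, hx.2.trans hx₀.2⟩
  have hright {x} (hx : x ∈ Ioo x₀ b) : x ∈ Ioo a b := ⟨hx₀.1.trans hx.1, hx.2⟩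
  refine isMaxOn_Icc_of_deriv hf.continuousAt hf.continuousAt hf.continuousAt
    (fun x hx => (hf' x (hleft hx)).differentiableAt.differentiableWithinAt)
    (fun x hx => (hf' x (hright hx)).differentiableAt.differentiableWithinAt)
    (fun x hx => ?_) (fun x hx => ?_)
  · rw [(hf' x (hleft hx)).deriv]
    exact mul_nonneg hc (sub_nonneg.2 (hφ (hleft hx) hx₀ hx.2.le))
  · rw [(hf' x (hright hx)).deriv]
    exact mul_nonpos_of_nonneg_of_nonpos hc (sub_nonpos.2 (hφ hx₀ (hright hx) hx.1.le))

theorem stmt9_general (η α₁ α₃ : ℝ) (hη0 : 0 < η) (hη1 : η < 1)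
    (hα₃ : 0 < α₃)
    (G K : ℝ → ℝ)
    (hG : ∀ z, G z = 1 - (η * Real.sqrt (1 - z) - Real.sqrt ((1 - η ^ 2) * z)) ^ 2)
    (hK : ∀ z, K z = α₃ * G z - α₁ * z)
    (u₀ z₀ : ℝ)
    (hu₀ : u₀ = (α₁ / α₃ - (2 * η ^ 2 - 1) +
        Real.sqrt ((α₁ / α₃) ^ 2 + 1 - 2 * (α₁ / α₃) * (2 * η ^ 2 - 1))) /
        (2 * η * Real.sqrt (1 - η ^ 2)))
    (hz₀ : z₀ = 1 / (1 + u₀ ^ 2)) :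
    z₀ ∈ Set.Ioo (0 : ℝ) 1 ∧
    α₃ * deriv G z₀ = α₁ ∧
    (∀ z ∈ Set.Ioo (0 : ℝ) 1, α₃ * deriv G z = α₁ → z = z₀) ∧
    ∀ z ∈ Set.Icc (0 : ℝ) 1, K z ≤ K z₀ := by
  obtain ⟨hz₀mem, hslope⟩ := one_div_one_add_sq_mem_Ioo_and_mul_sqrtMulOneSubDeriv_eq hη0 hη1 hu₀
  rw [← hz₀] at hz₀mem hslope
  set s := 2 * η * √(1 - η ^ 2)
  have hs : 0 < s := two_mul_mul_sqrt_one_sub_sq_pos hη0 hη1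
  have hG' : ∀ z ∈ Ioo 0 1, HasDerivAt G (2 * η ^ 2 - 1 + s * sqrtMulOneSubDeriv z) z := fun z hz =>
    funext hG ▸ hasDerivAt_one_sub_sq (by nlinarith) hz
  have hcrit : α₃ * (2 * η ^ 2 - 1 + s * sqrtMulOneSubDeriv z₀) = α₁ := by
    rw [hslope, add_sub_cancel, mul_div_cancel₀ _ hα₃.ne']
  have hK' : ∀ z ∈ Ioo 0 1, HasDerivAt K (α₃ * s * (sqrtMulOneSubDeriv z - sqrtMulOneSubDeriv z₀)) z := by
    intro z hz
    rw [funext hK]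
    refine (((hG' z hz).const_mul α₃).sub ((hasDerivAt_id' z).const_mul α₁)).congr_deriv ?_
    linear_combination hcrit
  refine ⟨hz₀mem, (hG' z₀ hz₀mem).deriv ▸ hcrit, fun z hz h => ?_, fun z hz => ?_⟩
  · rw [(hG' z hz).deriv, ← hcrit] at h
    have : sqrtMulOneSubDeriv z = sqrtMulOneSubDeriv z₀ :=
      mul_left_cancel₀ (mul_pos hα₃ hs).ne' (by linear_combination h)
    exact strictAntiOn_sqrtMulOneSubDeriv.injOn hz hz₀mem this
  · have hKc : Continuous K := by
      rw [funext hK, funext hG]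
      fun_prop
    exact isMaxOn_Icc_of_hasDerivAt_mul_sub hKc (mul_pos hα₃ hs).le
      strictAntiOn_sqrtMulOneSubDeriv.antitoneOn hz₀mem hK' hz

/-- For `K(z) = α₃ G_η(z) − α₁ z`, the point
`z₀ = 1/(1+u₀²)` lies in `(0,1)`, is the unique point of `(0,1)` with
`α₃ G_η′(z) = α₁`, and `K` attains its maximum over `[0,1]` at `z₀`. -/
theorem stmt9 (η α₁ α₃ : ℝ) (hη0 : 0 < η) (hη1 : η < 1)
    (hα₁ : 0 < α₁) (hα₃ : 0 < α₃)
    (G K : ℝ → ℝ)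
    (hG : ∀ z, G z = 1 - (η * Real.sqrt (1 - z) - Real.sqrt ((1 - η ^ 2) * z)) ^ 2)
    (hK : ∀ z, K z = α₃ * G z - α₁ * z)
    (u₀ z₀ : ℝ)
    (hu₀ : u₀ = (α₁ / α₃ - (2 * η ^ 2 - 1) +
        Real.sqrt ((α₁ / α₃) ^ 2 + 1 - 2 * (α₁ / α₃) * (2 * η ^ 2 - 1))) /
        (2 * η * Real.sqrt (1 - η ^ 2)))
    (hz₀ : z₀ = 1 / (1 + u₀ ^ 2)) :
    z₀ ∈ Set.Ioo (0 : ℝ) 1 ∧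
    α₃ * deriv G z₀ = α₁ ∧
    (∀ z ∈ Set.Ioo (0 : ℝ) 1, α₃ * deriv G z = α₁ → z = z₀) ∧
    ∀ z ∈ Set.Icc (0 : ℝ) 1, K z ≤ K z₀ :=
  stmt9_general η α₁ α₃ hη0 hη1 hα₃ G K hG hK u₀ z₀ hu₀ hz₀
end

section
/- Let α₂, α₃, α₄, P₀ > 0 and η ∈ (0, 1), and set d₂ = α₃(1−η²) and c₃ = α₄ + P₀ d₂. Define h(P_s) = log(1 + P_s/α₂) − log(1 + P_s/((P₀ − P_s) d₂ + α₄)) for P_s ∈ [0, P₀]. Then: (i) if α₂ > α₄ and P₀ < (α₂ − α₄)/d₂, then P_s = 0 maximizes h over [0, P₀]; (ii) if [α₂ < α₄, or α₂ > α₄ and P₀ > (α₂ − α₄)/d₂] and (P₀ + α₄)α₄ > (P₀ + α₂)(P₀ d₂ + α₄), then P_s = P₀ maximizes h over [0, P₀]; (iii) if d₂ ≠ 1, [α₂ < α₄, or α₂ > α₄ and P₀ > (α₂ − α₄)/d₂] and (P₀ + α₄)α₄ < (P₀ + α₂)(P₀ d₂ + α₄), then P_s* = (−c₃ d₂ + √(c₃²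 d₂² − c₃ d₂ (1 − d₂)(α₂ − c₃)))/(d₂(1 − d₂)) maximizes h over [0, P₀]. -/
private lemma aux_log (a b c d : ℝ) (ha : 0 < a) (hb : 0 < b) (hc : 0 < c) (hd : 0 < d)
    (h : a * d ≤ c * b) : Real.log a - Real.log b ≤ Real.log c - Real.log d := by
  rw [← Real.log_div ha.ne' hb.ne', ← Real.log_div hc.ne' hd.ne']
  apply Real.log_le_log (by positivity)
  rw [div_le_div_iff₀ hb hd]; linarith

private lemma aux_main (A Dx Dy x y : ℝ) (hA : 0 < A) (hDx : 0 < Dx) (hDy : 0 < Dy)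
    (hx : 0 ≤ x) (hy : 0 ≤ y)
    (h : (A + x) * Dx * (Dy + y) ≤ (A + y) * Dy * (Dx + x)) :
    Real.log (1 + x / A) - Real.log (1 + x / Dx) ≤
      Real.log (1 + y / A) - Real.log (1 + y / Dy) := by
  have e1 : 1 + x / A = (A + x) / A := by field_simp
  have e2 : 1 + x / Dx = (Dx + x) / Dx := by field_simp
  have e3 : 1 + y / A = (A + y) / A := by field_simp
  have e4 : 1 + y / Dy = (Dy + y) / Dy := by field_simp
  rw [e1, e2, e3, e4]
  apply aux_log _ _ _ _ (by positivity) (by positivity) (by positivity) (by positivity)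
  rw [div_mul_div_comm, div_mul_div_comm, div_le_div_iff₀ (by positivity) (by positivity)]
  nlinarith [mul_le_mul_of_nonneg_left h hA.le]

set_option maxHeartbeats 1000000 in
/-- Suboptimal cooperative-jamming secrecy-rate maximization obtained
by nulling the jamming signal at the destination (`z = 0`): the maximizer of
`f(Pₛ) = log(1 + Pₛ/α₂) − log(1 + Pₛ/((P₀ − Pₛ)d₂ + α₄))` over `[0, P₀]` in each of the
three cases. -/
theorem stmt10 (α₂ α₃ α₄ P₀ η : ℝ)
    (hα₂ : 0 < α₂) (hα₃ : 0 < α₃) (hα₄ : 0 < α₄) (hP₀ : 0 < P₀)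
    (hη0 : 0 < η) (hη1 : η < 1)
    (d₂ c₃ : ℝ) (hd₂ : d₂ = α₃ * (1 - η ^ 2)) (hc₃ : c₃ = α₄ + P₀ * d₂)
    (f : ℝ → ℝ)
    (hf : ∀ Ps, f Ps = Real.log (1 + Ps / α₂) -
      Real.log (1 + Ps / ((P₀ - Ps) * d₂ + α₄))) :
    ((α₄ < α₂ ∧ P₀ < (α₂ - α₄) / d₂) →
      ∀ Ps ∈ Set.Icc (0 : ℝ) P₀, f Ps ≤ f 0) ∧
    (((α₂ < α₄ ∨ (α₄ < α₂ ∧ (α₂ - α₄) / d₂ < P₀)) ∧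
        (P₀ + α₂) * (P₀ * d₂ + α₄) < (P₀ + α₄) * α₄) →
      ∀ Ps ∈ Set.Icc (0 : ℝ) P₀, f Ps ≤ f P₀) ∧
    ((d₂ ≠ 1 ∧ (α₂ < α₄ ∨ (α₄ < α₂ ∧ (α₂ - α₄) / d₂ < P₀)) ∧
        (P₀ + α₄) * α₄ < (P₀ + α₂) * (P₀ * d₂ + α₄)) →
      ∀ Ps ∈ Set.Icc (0 : ℝ) P₀,
        f Ps ≤ f ((-(c₃ * d₂) +
          Real.sqrt (c₃ ^ 2 * d₂ ^ 2 - c₃ * d₂ * (1 - d₂) * (α₂ - c₃))) /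
          (d₂ * (1 - d₂)))) := by
  have hd : 0 < d₂ := by
    rw [hd₂]; apply mul_pos hα₃; nlinarith
  have hC : 0 < c₃ := by rw [hc₃]; positivity
  -- D(t) = (P₀ - t)*d₂ + α₄ ; positive on [0, P₀]
  have hD : ∀ t : ℝ, 0 ≤ t → t ≤ P₀ → 0 < (P₀ - t) * d₂ + α₄ := by
    intro t ht1 ht2; nlinarith
  refine ⟨?_, ?_, ?_⟩
  · -- case (i)
    rintro ⟨h1, h2⟩ x ⟨hx0, hxP⟩
    have hCA : c₃ < α₂ := by
      rw [hc₃]; have := (lt_div_iff₀ hd).1 h2; linarith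
    rw [hf x, hf 0]
    have hDx := hD x hx0 hxP
    have hD0 := hD 0 le_rfl hP₀.le
    apply aux_main _ _ _ _ _ hα₂ hDx hD0 hx0 le_rfl
    have e0 : (P₀ - 0) * d₂ + α₄ = c₃ := by rw [hc₃]; ring
    have ex : (P₀ - x) * d₂ + α₄ = c₃ - d₂ * x := by rw [hc₃]; ring
    rw [e0, ex]
    nlinarith [mul_nonneg (mul_nonneg hC.le hx0) (by nlinarith : (0:ℝ) ≤ α₂ + d₂ * x - c₃)]
  · -- case (ii)
    rintro ⟨h1, h2⟩ x ⟨hx0, hxP⟩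
    rw [hf x, hf P₀]
    have hDx := hD x hx0 hxP
    have hDP : (0:ℝ) < (P₀ - P₀) * d₂ + α₄ := by simpa using hα₄
    apply aux_main _ _ _ _ _ hα₂ hDx hDP hx0 hP₀.le
    have ex : (P₀ - x) * d₂ + α₄ = c₃ - d₂ * x := by rw [hc₃]; ring
    have eP : (P₀ - P₀) * d₂ + α₄ = α₄ := by ring
    rw [ex, eP]
    -- G(x) = (P₀ - x) * (d₂*(α₄+P₀)*x + c₃*(α₂-α₄)) ≤ 0
    have hlin : d₂ * (α₄ + P₀) * x + c₃ * (α₂ - α₄) ≤ 0 := by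
      have : d₂ * (α₄ + P₀) * P₀ + c₃ * (α₂ - α₄) = c₃ * (α₂ + P₀) - α₄ * (α₄ + P₀) := by
        rw [hc₃]; ring
      have h2' : c₃ * (α₂ + P₀) - α₄ * (α₄ + P₀) < 0 := by rw [hc₃]; nlinarith
      nlinarith [mul_nonneg (mul_nonneg hd.le (by linarith : (0:ℝ) ≤ α₄ + P₀)) (by linarith : (0:ℝ) ≤ P₀ - x)]
    have gid : (α₂ + x) * (c₃ - d₂ * x) * (α₄ + P₀) - (α₂ + P₀) * α₄ * (c₃ - d₂ * x + x) =
        (P₀ - x) * (d₂ * (α₄ + P₀) * x + c₃ * (α₂ - α₄)) := by rw [hc₃]; ring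
    nlinarith [mul_nonpos_of_nonneg_of_nonpos (by linarith : (0:ℝ) ≤ P₀ - x) hlin, gid]
  · -- case (iii)
    rintro ⟨hd1, h1, h2⟩ x ⟨hx0, hxP⟩
    have ht : d₂ * (1 - d₂) ≠ 0 := by
      intro h; rcases mul_eq_zero.1 h with h | h
      · exact hd.ne' h
      · exact hd1 (by linarith)
    have hAC : α₂ < c₃ := by
      rcases h1 with h | ⟨h, h'⟩
      · rw [hc₃]; nlinarith
      · rw [hc₃]; have := (div_lt_iff₀ hd).1 h'; linarith
    obtain ⟨Δ, hΔdef⟩ : ∃ u : ℝ, u = c₃ ^ 2 * d₂ ^ 2 - c₃ * d₂ * (1 - d₂) * (α₂ - c₃) :=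
      ⟨_, rfl⟩
    rw [← hΔdef]
    have hΔ0 : 0 ≤ Δ := by
      have : Δ = d₂ * c₃ * (c₃ - α₂ + d₂ * α₂) := by rw [hΔdef]; ring
      rw [this]
      have h3 : 0 < c₃ - α₂ + d₂ * α₂ := by nlinarith
      positivity
    obtain ⟨s, hsdef⟩ : ∃ u : ℝ, u = Real.sqrt Δ := ⟨_, rfl⟩
    rw [← hsdef]
    have hs0 : 0 ≤ s := hsdef ▸ Real.sqrt_nonneg _
    have hs2 : s ^ 2 = Δ := by rw [hsdef]; exact Real.sq_sqrt hΔ0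
    obtain ⟨xs, hxsdef⟩ : ∃ u : ℝ, u = (-(c₃ * d₂) + s) / (d₂ * (1 - d₂)) := ⟨_, rfl⟩
    rw [← hxsdef]
    have hx1 : d₂ * (1 - d₂) * xs = s - d₂ * c₃ := by
      rw [hxsdef]; field_simp; ring
    have hφ : d₂ * (1 - d₂) * xs ^ 2 + 2 * d₂ * c₃ * xs = c₃ * (c₃ - α₂) := by
      have h2' : d₂ * (1 - d₂) * (d₂ * (1 - d₂) * xs ^ 2 + 2 * d₂ * c₃ * xs) =
          d₂ * (1 - d₂) * (c₃ * (c₃ - α₂)) := by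
        linear_combination (d₂ * (1 - d₂) * xs + s + d₂ * c₃) * hx1 + hs2 + hΔdef
      exact mul_left_cancel₀ ht h2'
    -- bounds 0 ≤ xs ≤ P₀
    have hφP : c₃ * (c₃ - α₂) - 2 * d₂ * c₃ * P₀ - d₂ * (1 - d₂) * P₀ ^ 2 < 0 := by
      rw [hc₃]; nlinarith
    have ee1 : Δ - (d₂ * c₃) ^ 2 = d₂ * (1 - d₂) * (c₃ * (c₃ - α₂)) := by
      rw [hΔdef]; ring
    have ee2 : (d₂ * c₃ + d₂ * (1 - d₂) * P₀) ^ 2 - Δ =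
        d₂ * (1 - d₂) * (2 * d₂ * c₃ * P₀ + d₂ * (1 - d₂) * P₀ ^ 2 - c₃ * (c₃ - α₂)) := by
      rw [hΔdef]; ring
    have hCCA : 0 < c₃ * (c₃ - α₂) := mul_pos hC (by linarith)
    have hinn : 0 < 2 * d₂ * c₃ * P₀ + d₂ * (1 - d₂) * P₀ ^ 2 - c₃ * (c₃ - α₂) := by linarith
    have hxs0 : 0 ≤ xs := by
      rcases lt_or_gt_of_ne hd1 with hlt | hgt
      · -- d₂ < 1
        have ht1 : 0 < d₂ * (1 - d₂) := by nlinarith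
        have hnum : d₂ * c₃ ≤ s := by
          rw [hsdef]
          have h4 : (d₂ * c₃) ^ 2 ≤ Δ := by linarith [ee1, mul_pos ht1 hCCA]
          have h5 : Real.sqrt ((d₂ * c₃) ^ 2) ≤ Real.sqrt Δ := Real.sqrt_le_sqrt h4
          rwa [Real.sqrt_sq (by positivity)] at h5
        rw [hxsdef]; exact div_nonneg (by linarith) ht1.le
      · -- d₂ > 1
        have ht1 : d₂ * (1 - d₂) < 0 := by nlinarith
        have hnum : s ≤ d₂ * c₃ := by
          rw [hsdef]
          have h4 : Δ ≤ (d₂ * c₃) ^ 2 := by linarith [ee1, mul_neg_of_neg_of_pos ht1 hCCA]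
          have h5 : Real.sqrt Δ ≤ Real.sqrt ((d₂ * c₃) ^ 2) := Real.sqrt_le_sqrt h4
          rwa [Real.sqrt_sq (by positivity)] at h5
        rw [hxsdef, div_nonneg_iff]
        right
        exact ⟨by linarith, ht1.le⟩
    have hxsP : xs ≤ P₀ := by
      rcases lt_or_gt_of_ne hd1 with hlt | hgt
      · -- d₂ < 1
        have ht1 : 0 < d₂ * (1 - d₂) := by nlinarith
        have hub : s ≤ d₂ * c₃ + d₂ * (1 - d₂) * P₀ := by
          rw [hsdef]
          have h4 : Δ ≤ (d₂ * c₃ + d₂ * (1 - d₂) * P₀) ^ 2 := by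
            linarith [ee2, mul_pos ht1 hinn]
          have h5 : Real.sqrt Δ ≤ Real.sqrt ((d₂ * c₃ + d₂ * (1 - d₂) * P₀) ^ 2) :=
            Real.sqrt_le_sqrt h4
          rwa [Real.sqrt_sq (by positivity)] at h5
        rw [hxsdef, div_le_iff₀ ht1]; linarith
      · -- d₂ > 1
        have ht1 : d₂ * (1 - d₂) < 0 := by nlinarith
        have hub : d₂ * c₃ + d₂ * (1 - d₂) * P₀ ≤ s := by
          rcases le_or_gt (d₂ * c₃ + d₂ * (1 - d₂) * P₀) 0 with h | h
          · linarith
          · rw [hsdef]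
            have h4 : (d₂ * c₃ + d₂ * (1 - d₂) * P₀) ^ 2 ≤ Δ := by
              nlinarith [mul_neg_of_neg_of_pos ht1 hinn]
            have h5 : Real.sqrt ((d₂ * c₃ + d₂ * (1 - d₂) * P₀) ^ 2) ≤ Real.sqrt Δ :=
              Real.sqrt_le_sqrt h4
            rwa [Real.sqrt_sq h.le] at h5
        rw [hxsdef, div_le_iff_of_neg ht1]; linarith
    -- conclude
    rw [hf x, hf xs]
    have hDx := hD x hx0 hxP
    have hDxs := hD xs hxs0 hxsP
    apply aux_main _ _ _ _ _ hα₂ hDx hDxs hx0 hxs0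
    have ex : (P₀ - x) * d₂ + α₄ = c₃ - d₂ * x := by rw [hc₃]; ring
    have exs : (P₀ - xs) * d₂ + α₄ = c₃ - d₂ * xs := by rw [hc₃]; ring
    rw [ex, exs]
    have hMxs : 0 < c₃ + (1 - d₂) * xs := by
      have : c₃ + (1 - d₂) * xs = ((P₀ - xs) * d₂ + α₄) + xs := by rw [hc₃]; ring
      rw [this]; positivity
    have keyeq : (α₂ + xs) * (c₃ - d₂ * xs) * ((c₃ - d₂ * x) + x) -
        (α₂ + x) * (c₃ - d₂ * x) * ((c₃ - d₂ * xs) + xs) =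
        d₂ * (c₃ + (1 - d₂) * xs) * (x - xs) ^ 2 := by
      linear_combination (x - xs) * hφ
    linarith [keyeq, mul_nonneg (mul_nonneg hd.le hMxs.le) (sq_nonneg (x - xs))]
end

section
/- Let η ∈ (0, 1) and q₁, q₂, q₃, q₄ > 0, define G_η(z) = 1 − (η√(1−z) − √((1−η²)z))² for z ∈ [0, 1], and define R(z) = log(1 + 1/(q₁ z + q₂)) − log(1 + 1/(q₃ G_η(z) + q₄)) for z ∈ (0, 1). If z′ ∈ (0, 1) satisfies R′(z′) = 0 and q₁ z′ + q₂ < q₃ G_η(z′) + q₄, then R″(z′) < 0. -/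
/-!
Write `R = φ ∘ a - φ ∘ b` with `φ x = log (1 + 1/x)`, `a z = q₁ z + q₂` and `b = q₃ G_η + q₄`,
so that `φ' x = -1/(x² + x)`. Stationarity says `b'/(b² + b) = a'/(a² + a)`; substituting this
into the second derivative collapses it to
`R'' = 2 a'² (a - b)/(a² + a)² - a''/(a² + a) + b''/(b² + b)`,
which is negative as soon as `a < b`, `a'' ≥ 0` and `b'' < 0`. The last holds because on `(0, 1)`
`G_η z = 1 - η² + (2η² - 1) z + 2η√(1 - η²) √(z - z²)`, and `√(z - z²)` is strictly concave.
-/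

open Real Filter Topology Set

theorem HasDerivAt.log_one_add_inv {f : ℝ → ℝ} {f' x : ℝ} (hf : HasDerivAt f f' x)
    (hx : f x ^ 2 + f x ≠ 0) :
    HasDerivAt (fun y => Real.log (1 + 1 / f y)) (-(f x ^ 2 + f x)⁻¹ * f') x := by
  have h0 : f x ≠ 0 := by rintro h; simp [h] at hx
  have h1 : 1 + (f x)⁻¹ ≠ 0 := by
    rw [show 1 + (f x)⁻¹ = (f x ^ 2 + f x) / f x ^ 2 by field_simp]
    exact div_ne_zero hx (pow_ne_zero 2 h0)
  convert ((hf.fun_inv h0).const_add 1).log h1 using 1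
  · simp only [one_div]
  · field_simp

theorem HasDerivAt.inv_sq_add_self {f : ℝ → ℝ} {f' x : ℝ} (hf : HasDerivAt f f' x)
    (hx : f x ^ 2 + f x ≠ 0) :
    HasDerivAt (fun y => (f y ^ 2 + f y)⁻¹) (-((2 * f x + 1) / (f x ^ 2 + f x) ^ 2 * f')) x := by
  refine (((hf.fun_pow 2).fun_add hf).fun_inv hx).congr_deriv ?_
  push_cast
  ring

section
variable {a b a' b' : ℝ → ℝ} {z : ℝ}

theorem hasDerivAt_log_one_add_inv_sub {p d : ℝ} (ha : HasDerivAt a p z) (hb : HasDerivAt b d z)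
    (ha0 : a z ^ 2 + a z ≠ 0) (hb0 : b z ^ 2 + b z ≠ 0) :
    HasDerivAt (fun y => log (1 + 1 / a y) - log (1 + 1 / b y))
      ((b z ^ 2 + b z)⁻¹ * d - (a z ^ 2 + a z)⁻¹ * p) z :=
  ((ha.log_one_add_inv ha0).fun_sub (hb.log_one_add_inv hb0)).congr_deriv (by ring)

theorem deriv_deriv_log_one_add_inv_sub {a'' b'' : ℝ}
    (ha : ∀ᶠ y in 𝓝 z, HasDerivAt a (a' y) y) (hb : ∀ᶠ y in 𝓝 z, HasDerivAt b (b' y) y)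
    (ha' : HasDerivAt a' a'' z) (hb' : HasDerivAt b' b'' z)
    (ha0 : a z ^ 2 + a z ≠ 0) (hb0 : b z ^ 2 + b z ≠ 0) :
    deriv (deriv fun y => log (1 + 1 / a y) - log (1 + 1 / b y)) z =
      (2 * a z + 1) / (a z ^ 2 + a z) ^ 2 * a' z ^ 2 - (a z ^ 2 + a z)⁻¹ * a'' -
        ((2 * b z + 1) / (b z ^ 2 + b z) ^ 2 * b' z ^ 2 - (b z ^ 2 + b z)⁻¹ * b'') := by
  have hne {f f' : ℝ → ℝ} (hf : ∀ᶠ y in 𝓝 z, HasDerivAt f (f' y) y) (hf0 : f z ^ 2 + f z ≠ 0) :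
      ∀ᶠ y in 𝓝 z, f y ^ 2 + f y ≠ 0 :=
    (hf.self_of_nhds.continuousAt.pow 2 |>.add hf.self_of_nhds.continuousAt).eventually_ne hf0
  have hD : deriv (fun y => log (1 + 1 / a y) - log (1 + 1 / b y)) =ᶠ[𝓝 z]
      fun y => (b y ^ 2 + b y)⁻¹ * b' y - (a y ^ 2 + a y)⁻¹ * a' y := by
    filter_upwards [ha, hb, hne ha ha0, hne hb hb0] with y hay hby hay0 hby0
    exact (hasDerivAt_log_one_add_inv_sub hay hby hay0 hby0).deriv
  rw [hD.deriv_eq]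
  apply HasDerivAt.deriv
  exact (((hb.self_of_nhds.inv_sq_add_self hb0).fun_mul hb').fun_sub
    ((ha.self_of_nhds.inv_sq_add_self ha0).fun_mul ha')).congr_deriv (by ring)

end

theorem log_one_add_inv_sub_second_deriv_neg {a b p d a'' b'' : ℝ} (ha : 0 < a) (hab : a < b)
    (ha'' : 0 ≤ a'') (hb'' : b'' < 0) (hstat : (b ^ 2 + b)⁻¹ * d - (a ^ 2 + a)⁻¹ * p = 0) :
    (2 * a + 1) / (a ^ 2 + a) ^ 2 * p ^ 2 - (a ^ 2 + a)⁻¹ * a'' -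
      ((2 * b + 1) / (b ^ 2 + b) ^ 2 * d ^ 2 - (b ^ 2 + b)⁻¹ * b'') < 0 := by
  set A := a ^ 2 + a
  set B := b ^ 2 + b
  have hA : 0 < A := by positivity
  have hB : 0 < B := by nlinarith
  have hd : d = B / A * p := by
    rw [sub_eq_zero, inv_mul_eq_iff_eq_mul₀ hB.ne'] at hstat
    rw [hstat]
    ring
  have key : (2 * a + 1) / A ^ 2 * p ^ 2 - A⁻¹ * a'' - ((2 * b + 1) / B ^ 2 * d ^ 2 - B⁻¹ * b'') =
      2 * (a - b) * p ^ 2 / A ^ 2 - a'' / A + b'' / B := by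
    rw [hd]
    field_simp
    ring
  rw [key]
  have h1 : 2 * (a - b) * p ^ 2 / A ^ 2 ≤ 0 :=
    div_nonpos_of_nonpos_of_nonneg (mul_nonpos_of_nonpos_of_nonneg (by linarith) (sq_nonneg p))
      (sq_nonneg _)
  have h2 : 0 ≤ a'' / A := div_nonneg ha'' hA.le
  have h3 : b'' / B < 0 := div_neg_of_neg_of_pos hb'' hB
  linarith

theorem hasDerivAt_sqrt_self_sub_sq {z : ℝ} (h0 : 0 < z) (h1 : z < 1) :
    HasDerivAt (fun z => √(z - z ^ 2)) ((1 - 2 * z) / (2 * √(z - z ^ 2))) z := by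
  have h : HasDerivAt (fun z : ℝ => z - z ^ 2) (1 - 2 * z) z := by
    simpa using (hasDerivAt_id z).fun_sub (hasDerivAt_pow 2 z)
  exact (h.sqrt (by nlinarith)).congr_deriv (by ring)

theorem hasDerivAt_deriv_sqrt_self_sub_sq {z : ℝ} (h0 : 0 < z) (h1 : z < 1) :
    HasDerivAt (fun z => (1 - 2 * z) / (2 * √(z - z ^ 2))) (-(1 / (4 * √(z - z ^ 2) ^ 3))) z := by
  have hs : 0 < √(z - z ^ 2) := sqrt_pos.2 (by nlinarith)
  have hsq : √(z - z ^ 2) ^ 2 = z - z ^ 2 := sq_sqrt (by nlinarith)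
  have hnum : HasDerivAt (fun z : ℝ => 1 - 2 * z) (-2) z := by
    simpa using ((hasDerivAt_id z).const_mul 2).const_sub 1
  refine (hnum.fun_div ((hasDerivAt_sqrt_self_sub_sq h0 h1).const_mul 2)
    (by positivity)).congr_deriv ?_
  set s := √(z - z ^ 2)
  field_simp
  linear_combination (-16) * hsq

noncomputable def jammingGain (η z : ℝ) : ℝ := 1 - (η * √(1 - z) - √((1 - η ^ 2) * z)) ^ 2

noncomputable def jammingGainDeriv (η z : ℝ) : ℝ :=
  2 * η ^ 2 - 1 + 2 * η * √(1 - η ^ 2) * ((1 - 2 * z) / (2 * √(z - z ^ 2)))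

section
variable {η z : ℝ}

theorem jammingGain_eq (hη : η ^ 2 ≤ 1) (h0 : 0 ≤ z) (h1 : z ≤ 1) :
    jammingGain η z = 1 - η ^ 2 + (2 * η ^ 2 - 1) * z + 2 * η * √(1 - η ^ 2) * √(z - z ^ 2) := by
  have hx : √(1 - z) ^ 2 = 1 - z := sq_sqrt (by linarith)
  have hy : √((1 - η ^ 2) * z) ^ 2 = (1 - η ^ 2) * z := sq_sqrt (by nlinarith)
  have hxy : √(1 - z) * √((1 - η ^ 2) * z) = √(1 - η ^ 2) * √(z - z ^ 2) := by
    rw [← sqrt_mul (by linarith), ← sqrt_mul (by linarith)]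
    ring_nf
  unfold jammingGain
  linear_combination (-(η ^ 2)) * hx - hy + (2 * η) * hxy

theorem hasDerivAt_jammingGain (hη : η ^ 2 ≤ 1) (hz : z ∈ Ioo 0 1) :
    HasDerivAt (jammingGain η) (jammingGainDeriv η z) z := by
  have hEq : (fun y => 1 - η ^ 2 + (2 * η ^ 2 - 1) * y + 2 * η * √(1 - η ^ 2) * √(y - y ^ 2))
      =ᶠ[𝓝 z] jammingGain η := by
    filter_upwards [Ioo_mem_nhds hz.1 hz.2] with y hy
    exact (jammingGain_eq hη hy.1.le hy.2.le).symm
  refine HasDerivAt.congr_of_eventuallyEq ?_ hEq.symm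
  simpa [jammingGainDeriv] using
    (((hasDerivAt_id z).const_mul (2 * η ^ 2 - 1)).const_add (1 - η ^ 2)).fun_add
      ((hasDerivAt_sqrt_self_sub_sq hz.1 hz.2).const_mul (2 * η * √(1 - η ^ 2)))

theorem hasDerivAt_jammingGainDeriv (hz : z ∈ Ioo 0 1) :
    HasDerivAt (jammingGainDeriv η) (-(η * √(1 - η ^ 2) / (2 * √(z - z ^ 2) ^ 3))) z :=
  (((hasDerivAt_deriv_sqrt_self_sub_sq hz.1 hz.2).const_mul _).const_add _).congr_deriv
    (by ring)

end

theorem stmt11_general (η q₁ q₂ q₃ q₄ : ℝ) (hη0 : 0 < η) (hη1 : η < 1)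
    (hq₁ : 0 < q₁) (hq₂ : 0 < q₂) (hq₃ : 0 < q₃)
    (G R : ℝ → ℝ)
    (hG : ∀ z, G z = 1 - (η * Real.sqrt (1 - z) - Real.sqrt ((1 - η ^ 2) * z)) ^ 2)
    (hR : ∀ z, R z = Real.log (1 + 1 / (q₁ * z + q₂)) -
      Real.log (1 + 1 / (q₃ * G z + q₄)))
    (z' : ℝ) (hz' : z' ∈ Set.Ioo (0 : ℝ) 1)
    (hstat : deriv R z' = 0)
    (hlt : q₁ * z' + q₂ < q₃ * G z' + q₄) :
    deriv (deriv R) z' < 0 := by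
  obtain rfl : R = fun y => log (1 + 1 / (q₁ * y + q₂)) - log (1 + 1 / (q₃ * G y + q₄)) :=
    funext hR
  obtain rfl : G = jammingGain η := funext hG
  have ha (y : ℝ) : HasDerivAt (fun y => q₁ * y + q₂) q₁ y := by
    simpa using ((hasDerivAt_id y).const_mul q₁).add_const q₂
  have hb : ∀ᶠ y in 𝓝 z', HasDerivAt (fun y => q₃ * jammingGain η y + q₄)
      (q₃ * jammingGainDeriv η y) y := by
    filter_upwards [Ioo_mem_nhds hz'.1 hz'.2] with y hy
    exact ((hasDerivAt_jammingGain (by nlinarith) hy).const_mul q₃).add_const q₄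
  have hapos : 0 < q₁ * z' + q₂ := by nlinarith [hz'.1]
  have hbpos : 0 < q₃ * jammingGain η z' + q₄ := hapos.trans hlt
  have hb'' : q₃ * -(η * √(1 - η ^ 2) / (2 * √(z' - z' ^ 2) ^ 3)) < 0 := by
    have : 0 < √(1 - η ^ 2) := sqrt_pos.2 (by nlinarith)
    have : 0 < √(z' - z' ^ 2) := sqrt_pos.2 (by nlinarith [hz'.1, hz'.2])
    exact mul_neg_of_pos_of_neg hq₃ (neg_neg_of_pos (by positivity))
  have ha0 : (q₁ * z' + q₂) ^ 2 + (q₁ * z' + q₂) ≠ 0 := by positivity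
  have hb0 : (q₃ * jammingGain η z' + q₄) ^ 2 + (q₃ * jammingGain η z' + q₄) ≠ 0 := by
    positivity
  rw [(hasDerivAt_log_one_add_inv_sub (ha z') hb.self_of_nhds ha0 hb0).deriv] at hstat
  rw [deriv_deriv_log_one_add_inv_sub (a' := fun _ => q₁) (Eventually.of_forall ha) hb
    (hasDerivAt_const z' q₁) ((hasDerivAt_jammingGainDeriv hz').const_mul q₃) ha0 hb0]
  exact log_one_add_inv_sub_second_deriv_neg hapos hlt le_rfl hb'' hstat

/-- The cooperative-jamming secrecy-rate objective
`R(z) = log(1 + 1/(q₁z + q₂)) − log(1 + 1/(q₃ G_η(z) + q₄))` is strictly concave at any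
stationary point `z′ ∈ (0,1)` at which it is positive (`q₁z′ + q₂ < q₃G_η(z′) + q₄`). -/
theorem stmt11 (η q₁ q₂ q₃ q₄ : ℝ) (hη0 : 0 < η) (hη1 : η < 1)
    (hq₁ : 0 < q₁) (hq₂ : 0 < q₂) (hq₃ : 0 < q₃) (hq₄ : 0 < q₄)
    (G R : ℝ → ℝ)
    (hG : ∀ z, G z = 1 - (η * Real.sqrt (1 - z) - Real.sqrt ((1 - η ^ 2) * z)) ^ 2)
    (hR : ∀ z, R z = Real.log (1 + 1 / (q₁ * z + q₂)) -
      Real.log (1 + 1 / (q₃ * G z + q₄)))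
    (z' : ℝ) (hz' : z' ∈ Set.Ioo (0 : ℝ) 1)
    (hstat : deriv R z' = 0)
    (hlt : q₁ * z' + q₂ < q₃ * G z' + q₄) :
    deriv (deriv R) z' < 0 :=
  stmt11_general η q₁ q₂ q₃ q₄ hη0 hη1 hq₁ hq₂ hq₃ G R hG hR z' hz' hstat hlt
end

section
/- Let N > J ≥ 1, let g₁, …, g_J ∈ ℂ^N be linearly independent, and let E : ℂ^{N−J} → ℂ^N be a linear isometry whose range equals {w ∈ ℂ^N : ⟨g_j, w⟩ = 0 for all j = 1, …, J}. Let h ∈ ℂ^N, h₀ ∈ ℂ, g_{01}, …, g_{0J} ∈ ℂ, σ > 0, and 0 ≤ P_min ≤ P₀. Define f₂(P_s) = (σ² + P_s|h₀|² + (P₀ − P_s)‖E† h‖²)/(σ² + P_s · max_{1≤j≤J} |g_{0j}|²), where E† is the adjoint of E. Then the supremum, over P_s ∈ [P_min, P₀] and w ∈ ℂ^N with ‖w‖² = P₀ − P_s and ⟨g_j, w⟩ = 0 for all j, of (σ² + P_s|h₀|² + |⟨h, w⟩|²)/(σ² + P_s · max_{1≤j≤J} |g_{0j}|²) equals max{f₂(P_min),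 f₂(P₀)}, and it is attained. -/
/-!
Every feasible beamformer lies in the range of the isometry `E`, so `w = E u` with
`‖u‖² = P₀ − Pₛ`, and `⟨h, E u⟩ = ⟨E† h, u⟩`. By Cauchy–Schwarz, for fixed `Pₛ` the best `w`
is `u` aligned with `E† h`, giving exactly `f₂(Pₛ)`. Then `f₂` is a ratio of two affine
functions of `Pₛ` with positive denominator, hence monotone on `[P_min, P₀]`, so its maximum
is at an endpoint.
-/

open scoped InnerProductSpace

lemma add_mul_div_add_mul_le_max {a b c d p q t : ℝ} (hpt : p ≤ t) (htq : t ≤ q)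
    (hp : 0 < c + p * d) (hq : 0 < c + q * d) :
    (a + t * b) / (c + t * d) ≤
      max ((a + p * b) / (c + p * d)) ((a + q * b) / (c + q * d)) := by
  have ht : 0 < c + t * d := by
    rcases le_total 0 d with hd | hd <;> nlinarith
  -- the derivative in `t` has the constant sign of `b c - a d`
  rcases le_total (b * c) (a * d) with hbc | hbc
  · refine le_max_of_le_left ?_
    rw [div_le_div_iff₀ ht hp]
    nlinarith [mul_nonneg (sub_nonneg.mpr hpt) (sub_nonneg.mpr hbc)]
  · refine le_max_of_le_right ?_
    rw [div_le_div_iff₀ ht hq]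
    nlinarith [mul_nonneg (sub_nonneg.mpr htq) (sub_nonneg.mpr hbc)]

section InnerProductSpace

variable {𝕜 F G : Type*} [RCLike 𝕜] [NormedAddCommGroup F] [InnerProductSpace 𝕜 F]

lemma exists_norm_eq_norm_inner_eq [Nontrivial F] (a : F) {c : ℝ} (hc : 0 ≤ c) :
    ∃ u : F, ‖u‖ = c ∧ ‖⟪a, u⟫_𝕜‖ = ‖a‖ * c := by
  rcases eq_or_ne a 0 with rfl | ha
  · let _ := InnerProductSpace.rclikeToReal 𝕜 F
    obtain ⟨u, hu⟩ := exists_norm_eq F hc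
    exact ⟨u, hu, by simp⟩
  · have ha' : 0 < ‖a‖ := norm_pos_iff.mpr ha
    refine ⟨((c / ‖a‖ : ℝ) : 𝕜) • a, ?_, ?_⟩
    · rw [norm_smul, RCLike.norm_ofReal, abs_of_nonneg (by positivity)]
      field_simp
    · rw [inner_smul_right, inner_self_eq_norm_sq_to_K, norm_mul, RCLike.norm_ofReal,
        abs_of_nonneg (by positivity), norm_pow, RCLike.norm_ofReal, abs_norm]
      field_simp

variable [FiniteDimensional 𝕜 F] [NormedAddCommGroup G] [InnerProductSpace 𝕜 G]
  [FiniteDimensional 𝕜 G]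

lemma LinearMap.norm_inner_apply_le (T : F →ₗ[𝕜] G) (h : G) (u : F) :
    ‖⟪h, T u⟫_𝕜‖ ≤ ‖LinearMap.adjoint T h‖ * ‖u‖ := by
  rw [← LinearMap.adjoint_inner_left]
  exact norm_inner_le_norm _ _

lemma LinearMap.exists_norm_eq_norm_inner_apply_eq [Nontrivial F] (T : F →ₗ[𝕜] G) (h : G)
    {c : ℝ} (hc : 0 ≤ c) :
    ∃ u : F, ‖u‖ = c ∧ ‖⟪h, T u⟫_𝕜‖ = ‖LinearMap.adjoint T h‖ * c := by
  simp_rw [← LinearMap.adjoint_inner_left]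
  exact exists_norm_eq_norm_inner_eq _ hc

end InnerProductSpace

theorem stmt12_general {N J : ℕ} (hNJ : J < N)
    (g : Fin J → EuclideanSpace ℂ (Fin N))
    (E : EuclideanSpace ℂ (Fin (N - J)) →ₗᵢ[ℂ] EuclideanSpace ℂ (Fin N))
    (hE : Set.range (⇑E) =
      {w : EuclideanSpace ℂ (Fin N) | ∀ j, (inner ℂ (g j) w : ℂ) = 0})
    (h : EuclideanSpace ℂ (Fin N)) (h₀ : ℂ) (g₀ : Fin J → ℂ)
    (σ Pmin P₀ : ℝ) (hσ : 0 < σ) (hPmin : 0 ≤ Pmin) (hP : Pmin ≤ P₀)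
    (f₂ : ℝ → ℝ)
    (hf₂ : ∀ Ps, f₂ Ps =
      (σ ^ 2 + Ps * ‖h₀‖ ^ 2 +
        (P₀ - Ps) * ‖LinearMap.adjoint E.toLinearMap h‖ ^ 2) /
      (σ ^ 2 + Ps * ⨆ j, ‖g₀ j‖ ^ 2)) :
    IsGreatest {v : ℝ | ∃ Ps ∈ Set.Icc Pmin P₀, ∃ w : EuclideanSpace ℂ (Fin N),
        ‖w‖ ^ 2 = P₀ - Ps ∧ (∀ j, (inner ℂ (g j) w : ℂ) = 0) ∧
        v = (σ ^ 2 + Ps * ‖h₀‖ ^ 2 + ‖(inner ℂ h w : ℂ)‖ ^ 2) /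
            (σ ^ 2 + Ps * ⨆ j, ‖g₀ j‖ ^ 2)}
      (max (f₂ Pmin) (f₂ P₀)) := by
  set A := LinearMap.adjoint E.toLinearMap h
  set M := ⨆ j, ‖g₀ j‖ ^ 2
  have hM : 0 ≤ M := Real.iSup_nonneg fun _ ↦ by positivity
  have : NeZero (N - J) := ⟨by omega⟩
  have hnull (w) : (∀ j, (inner ℂ (g j) w : ℂ) = 0) ↔ w ∈ Set.range E := by rw [hE]; rfl
  refine ⟨?_, ?_⟩
  · obtain ⟨Ps, hPs, hmax⟩ : ∃ Ps ∈ Set.Icc Pmin P₀, max (f₂ Pmin) (f₂ P₀) = f₂ Ps := by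
      rcases max_choice (f₂ Pmin) (f₂ P₀) with hmax | hmax
      exacts [⟨Pmin, ⟨le_rfl, hP⟩, hmax⟩, ⟨P₀, ⟨hP, le_rfl⟩, hmax⟩]
    obtain ⟨u, hu, hval⟩ := E.toLinearMap.exists_norm_eq_norm_inner_apply_eq h
      (Real.sqrt_nonneg (P₀ - Ps))
    have hsq : ‖E u‖ ^ 2 = P₀ - Ps := by
      rw [E.norm_map, hu, Real.sq_sqrt (sub_nonneg.mpr hPs.2)]
    refine ⟨Ps, hPs, E u, hsq, (hnull _).2 ⟨u, rfl⟩, ?_⟩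
    rw [LinearIsometry.coe_toLinearMap] at hval
    rw [hmax, hf₂, hval, mul_pow, Real.sq_sqrt (sub_nonneg.mpr hPs.2),
      mul_comm (_ ^ 2) (P₀ - Ps)]
  · rintro v ⟨Ps, hPs, w, hw, hw0, rfl⟩
    obtain ⟨u, rfl⟩ := (hnull w).1 hw0
    have hD (t) (ht : 0 ≤ t) : 0 < σ ^ 2 + t * M := by positivity
    have hform (t) : f₂ t = ((σ ^ 2 + P₀ * ‖A‖ ^ 2) + t * (‖h₀‖ ^ 2 - ‖A‖ ^ 2)) /
        (σ ^ 2 + t * M) := by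
      rw [hf₂]; congr 1; ring
    calc _ ≤ f₂ Ps := by
          rw [hf₂, ← hw, mul_comm _ (‖A‖ ^ 2), ← mul_pow, E.norm_map]
          gcongr
          · exact (hD Ps (hPmin.trans hPs.1)).le
          · exact E.toLinearMap.norm_inner_apply_le h u
      _ ≤ max (f₂ Pmin) (f₂ P₀) := by
          rw [hform, hform, hform]
          exact add_mul_div_add_mul_le_max hPs.1 hPs.2 (hD _ hPmin) (hD _ (hPmin.trans hP))

/-- Suboptimal DF scheme with multiple eavesdroppers obtained by
nulling the signal at all eavesdroppers: with `E` a linear isometry onto the common null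
space of the eavesdropper channels, the optimal value is `max {f₂(P_min), f₂(P₀)}`
where `f₂(Pₛ) = (σ² + Pₛ|h₀|² + (P₀ − Pₛ)‖E†h‖²)/(σ² + Pₛ maxⱼ |g₀ⱼ|²)`,
and it is attained. -/
theorem stmt12 {N J : ℕ} (hJ : 1 ≤ J) (hNJ : J < N)
    (g : Fin J → EuclideanSpace ℂ (Fin N)) (hg : LinearIndependent ℂ g)
    (E : EuclideanSpace ℂ (Fin (N - J)) →ₗᵢ[ℂ] EuclideanSpace ℂ (Fin N))
    (hE : Set.range (⇑E) =
      {w : EuclideanSpace ℂ (Fin N) | ∀ j, (inner ℂ (g j) w : ℂ) = 0})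
    (h : EuclideanSpace ℂ (Fin N)) (h₀ : ℂ) (g₀ : Fin J → ℂ)
    (σ Pmin P₀ : ℝ) (hσ : 0 < σ) (hPmin : 0 ≤ Pmin) (hP : Pmin ≤ P₀)
    (f₂ : ℝ → ℝ)
    (hf₂ : ∀ Ps, f₂ Ps =
      (σ ^ 2 + Ps * ‖h₀‖ ^ 2 +
        (P₀ - Ps) * ‖LinearMap.adjoint E.toLinearMap h‖ ^ 2) /
      (σ ^ 2 + Ps * ⨆ j, ‖g₀ j‖ ^ 2)) :
    IsGreatest {v : ℝ | ∃ Ps ∈ Set.Icc Pmin P₀, ∃ w : EuclideanSpace ℂ (Fin N),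
        ‖w‖ ^ 2 = P₀ - Ps ∧ (∀ j, (inner ℂ (g j) w : ℂ) = 0) ∧
        v = (σ ^ 2 + Ps * ‖h₀‖ ^ 2 + ‖(inner ℂ h w : ℂ)‖ ^ 2) /
            (σ ^ 2 + Ps * ⨆ j, ‖g₀ j‖ ^ 2)}
      (max (f₂ Pmin) (f₂ P₀)) :=
  stmt12_general hNJ g E hE h h₀ g₀ σ Pmin P₀ hσ hPmin hP f₂ hf₂
end

section
/- Let A₁ and A₂ be N×N Hermitian positive definite matrices. Then sup{Tr(Z) : Z an N×N Hermitian positive semidefinite matrix with Tr(A₁ Z) ≤ 1 and Tr(A₂ Z) ≤ 1} equals sup{‖v‖² : v ∈ ℂ^N, v† A₁ v ≤ 1 and v† A₂ v ≤ 1}; that is, the semidefinite relaxation of the quadratically constrained quadratic program with two constraints is tight, and its optimal value is attained by a rank-one feasible matrix Z = v v†. -/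
/-!
Write `qᵢ v = v† Aᵢ v`. The function `λ t = min_{‖u‖ = 1} (t q₁ + (1 - t) q₂) u`, the least
eigenvalue of `t A₁ + (1 - t) A₂`, is upper semicontinuous, so it attains its maximum `λ₀` at some
`t₀ ∈ [0, 1]`. Then `t₀ A₁ + (1 - t₀) A₂ - λ₀ I ⪰ 0`, hence `λ₀ Tr Z ≤ 1` for every feasible `Z`.
Conversely, moving `t` from `t₀` towards `1` (resp. `0`) cannot increase `λ`, which produces unit
minimizers at `t₀` with `q₁ ≤ q₂` (resp. `q₂ ≤ q₁`). The minimizers form the unit sphere of a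
complex eigenspace, which is connected, so some unit minimizer `u` has `q₁ u, q₂ u ≤ λ₀`, and
`v = u / √λ₀` is feasible with `‖v‖² = 1 / λ₀`.
-/

open scoped ComplexOrder
open Set Filter Topology Metric Matrix

section Maximin

variable {X : Type*} [TopologicalSpace X] {S : Set X}

theorem IsCompact.exists_maximin {Y : Type*} [TopologicalSpace Y] {T : Set Y}
    (hT : IsCompact T) (hTne : T.Nonempty) (hS : IsCompact S) (hSne : S.Nonempty)
    {F : Y → X → ℝ} (hFl : ∀ w, Continuous (F · w)) (hFr : ∀ t, Continuous (F t)) :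
    ∃ t₀ ∈ T, ∃ lam : ℝ, (∀ w ∈ S, lam ≤ F t₀ w) ∧ ∀ t ∈ T, ∃ v ∈ S, F t v ≤ lam := by
  have : Nonempty S := hSne.to_subtype
  have hbdd : ∀ t, BddBelow (range fun w : S => F t w) := fun t => by
    rw [← image_eq_range]
    exact (hS.image (hFr t)).bddBelow
  obtain ⟨t₀, ht₀, hmax⟩ :=
    (upperSemicontinuous_ciInf hbdd fun w => (hFl w).upperSemicontinuous).upperSemicontinuousOn T
      |>.exists_isMaxOn hTne hT
  refine ⟨t₀, ht₀, ⨅ w : S, F t₀ w, fun w hw => ciInf_le (hbdd t₀) ⟨w, hw⟩, fun t ht => ?_⟩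
  obtain ⟨v, hv, hvmin⟩ := hS.exists_isMinOn hSne (hFr t).continuousOn
  exact ⟨v, hv, (le_ciInf fun w => hvmin w.2).trans (hmax ht)⟩

theorem IsCompact.exists_eq_and_nonpos_of_perturbation (hS : IsCompact S) {f d : X → ℝ}
    (hf : Continuous f) (hd : Continuous d) {lam : ℝ} (hlam : ∀ w ∈ S, lam ≤ f w)
    (hpert : ∀ᶠ ε in 𝓝[>] (0 : ℝ), ∃ v ∈ S, f v + ε * d v ≤ lam) :
    ∃ u ∈ S, f u = lam ∧ d u ≤ 0 := by
  set K := S ∩ {w | d w ≤ 0}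
  have hK : IsCompact K := hS.inter_right (isClosed_le hd continuous_const)
  have hpertK : ∀ᶠ ε in 𝓝[>] (0 : ℝ), ∃ v ∈ K, f v ≤ lam - ε * d v := by
    filter_upwards [hpert, self_mem_nhdsWithin] with ε ⟨v, hvS, hv⟩ (hε : 0 < ε)
    have : ε * d v ≤ 0 := by linarith [hlam v hvS]
    exact ⟨v, ⟨hvS, nonpos_of_mul_nonpos_right this hε⟩, by linarith⟩
  obtain ⟨-, v, hvK, -⟩ := hpertK.exists
  obtain ⟨u, huK, hu⟩ := hK.exists_isMinOn ⟨v, hvK⟩ hf.continuousOn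
  obtain ⟨w₀, -, hdmin⟩ := hS.exists_isMinOn ⟨v, hvK.1⟩ hd.continuousOn
  have hbound : ∀ᶠ ε in 𝓝[>] (0 : ℝ), f u ≤ lam - ε * d w₀ := by
    filter_upwards [hpertK, self_mem_nhdsWithin] with ε ⟨v, hvK, hv⟩ (hε : 0 < ε)
    calc f u ≤ f v := hu hvK
      _ ≤ lam - ε * d v := hv
      _ ≤ lam - ε * d w₀ := by gcongr; exact hdmin hvK.1
  have hlim : Tendsto (fun ε => lam - ε * d w₀) (𝓝[>] 0) (𝓝 lam) := by
    have : Continuous fun ε : ℝ => lam - ε * d w₀ := by fun_prop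
    simpa using this.continuousWithinAt (s := Ioi 0) (x := 0) |>.tendsto
  exact ⟨u, huK.1, le_antisymm (ge_of_tendsto hlim hbound) (hlam u huK.1), huK.2⟩

variable {q₁ q₂ : X → ℝ}

theorem IsCompact.exists_eq_pencil_and_le_of_lt_one (hS : IsCompact S) (hq₁ : Continuous q₁)
    (hq₂ : Continuous q₂) {t₀ lam : ℝ} (ht₀ : t₀ < 1)
    (hlam : ∀ w ∈ S, lam ≤ (t₀ • q₁ + (1 - t₀) • q₂) w)
    (hmax : ∀ t ∈ Ioc t₀ 1, ∃ v ∈ S, (t • q₁ + (1 - t) • q₂) v ≤ lam) :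
    ∃ a ∈ S, (t₀ • q₁ + (1 - t₀) • q₂) a = lam ∧ q₁ a ≤ q₂ a := by
  obtain ⟨a, ha, hfa, hda⟩ :=
    hS.exists_eq_and_nonpos_of_perturbation (by fun_prop) (hq₁.sub hq₂) hlam <| by
      filter_upwards [Ioo_mem_nhdsGT (sub_pos.mpr ht₀)] with ε hε
      obtain ⟨v, hv, hle⟩ := hmax (t₀ + ε) ⟨by linarith [hε.1], by linarith [hε.2]⟩
      refine ⟨v, hv, le_of_eq_of_le ?_ hle⟩
      simp only [Pi.add_apply, Pi.smul_apply, Pi.sub_apply, smul_eq_mul]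
      ring
  exact ⟨a, ha, hfa, sub_nonpos.mp hda⟩

theorem IsCompact.exists_isMinOn_pencil_of_isPreconnected (hS : IsCompact S)
    (hSne : S.Nonempty) (hq₁ : Continuous q₁) (hq₂ : Continuous q₂)
    (hconn : ∀ t ∈ Icc (0 : ℝ) 1, IsPreconnected {w ∈ S | IsMinOn (t • q₁ + (1 - t) • q₂) S w}) :
    ∃ t ∈ Icc (0 : ℝ) 1, ∃ u ∈ S, IsMinOn (t • q₁ + (1 - t) • q₂) S u ∧
      q₁ u ≤ (t • q₁ + (1 - t) • q₂) u ∧ q₂ u ≤ (t • q₁ + (1 - t) • q₂) u := by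
  obtain ⟨t₀, ht₀, lam, hlam, hmax⟩ :=
    (isCompact_Icc (a := (0 : ℝ)) (b := 1)).exists_maximin (nonempty_Icc.2 zero_le_one) hS hSne
      (F := fun t => t • q₁ + (1 - t) • q₂) (fun w => by fun_prop) (fun t => by fun_prop)
  set F := t₀ • q₁ + (1 - t₀) • q₂
  have hmin : ∀ u ∈ S, F u = lam → IsMinOn F S u := fun u _ hu =>
    isMinOn_iff.mpr fun w hw => hu ▸ hlam w hw
  have hleft : t₀ < 1 → ∃ a ∈ S, F a = lam ∧ q₁ a ≤ q₂ a := fun h =>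
    hS.exists_eq_pencil_and_le_of_lt_one hq₁ hq₂ h hlam fun t ht =>
      hmax t ⟨by linarith [ht.1, ht₀.1], ht.2⟩
  have hright : 0 < t₀ → ∃ b ∈ S, F b = lam ∧ q₂ b ≤ q₁ b := fun h => by
    have hswap : ∀ s : ℝ, s • q₂ + (1 - s) • q₁ = (1 - s) • q₁ + (1 - (1 - s)) • q₂ := fun s => by
      ext w; simp only [Pi.add_apply, Pi.smul_apply, smul_eq_mul]; ring
    have := hS.exists_eq_pencil_and_le_of_lt_one hq₂ hq₁ (t₀ := 1 - t₀) (lam := lam)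
      (by linarith) (by rw [hswap, sub_sub_cancel]; exact hlam) fun t ht => by
        rw [hswap]; exact hmax (1 - t) ⟨by linarith [ht.2], by linarith [ht.1, ht₀.2]⟩
    rwa [hswap, sub_sub_cancel] at this
  rcases ht₀.1.eq_or_lt with h0 | h0
  · obtain ⟨a, ha, hFa, hle⟩ := hleft (h0 ▸ zero_lt_one)
    refine ⟨t₀, ht₀, a, ha, hmin a ha hFa, ?_, ?_⟩ <;> simp [← h0, hle]
  rcases ht₀.2.eq_or_lt with h1 | h1
  · obtain ⟨b, hb, hFb, hle⟩ := hright h0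
    refine ⟨t₀, ht₀, b, hb, hmin b hb hFb, ?_, ?_⟩ <;> simp [h1, hle]
  obtain ⟨a, ha, hFa, hla⟩ := hleft h1
  obtain ⟨b, hb, hFb, hlb⟩ := hright h0
  obtain ⟨u, ⟨hu, humin⟩, hequ⟩ := (hconn t₀ ht₀).intermediate_value₂ ⟨ha, hmin a ha hFa⟩
    ⟨hb, hmin b hb hFb⟩ hq₁.continuousOn hq₂.continuousOn hla hlb
  have hFu : F u = q₁ u := by simp only [F, Pi.add_apply, Pi.smul_apply, smul_eq_mul, hequ]; ring
  exact ⟨t₀, ht₀, u, hu, humin, hFu.ge, hequ ▸ hFu.ge⟩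

end Maximin

theorem Submodule.isPreconnected_sphere_inter {E : Type*} [NormedAddCommGroup E]
    [NormedSpace ℂ E] [FiniteDimensional ℂ E] (K : Submodule ℂ E) (r : ℝ) :
    IsPreconnected (sphere (0 : E) r ∩ K) := by
  rcases eq_or_ne K ⊥ with rfl | hK
  · refine Subsingleton.isPreconnected fun x hx y hy => ?_
    rw [(Submodule.mem_bot ℂ).1 hx.2, (Submodule.mem_bot ℂ).1 hy.2]
  have hrank : 1 < Module.rank ℝ K := by
    have : 0 < Module.finrank ℂ K := Nat.pos_of_ne_zero (Submodule.finrank_eq_zero.not.mpr hK)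
    rw [← Module.finrank_eq_rank, ← Module.finrank_mul_finrank ℝ ℂ K, Complex.finrank_real_complex]
    norm_cast
    omega
  have : sphere (0 : E) r ∩ K = (↑) '' sphere (0 : K) r := by
    ext x
    simp
  rw [this]
  exact (isPreconnected_sphere hrank 0 r).image _ continuous_subtype_val.continuousOn

section QuadForm

variable {n : Type*} [Fintype n] [DecidableEq n]

noncomputable def quadForm (A : Matrix n n ℂ) (v : EuclideanSpace ℂ n) : ℝ :=
  (inner ℂ v (A.toEuclideanLin v)).re

lemma quadForm_eq_re_dotProduct (A : Matrix n n ℂ) (v : EuclideanSpace ℂ n) :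
    quadForm A v = (star v.ofLp ⬝ᵥ A *ᵥ v.ofLp).re := by
  rw [quadForm, EuclideanSpace.inner_eq_star_dotProduct, dotProduct_comm]
  rfl

lemma continuous_quadForm (A : Matrix n n ℂ) : Continuous (quadForm A) := by
  have := LinearMap.continuous_of_finiteDimensional A.toEuclideanLin
  unfold quadForm
  fun_prop

lemma quadForm_smul (A : Matrix n n ℂ) (c : ℂ) (v : EuclideanSpace ℂ n) :
    quadForm A (c • v) = ‖c‖ ^ 2 * quadForm A v := by
  rw [quadForm, quadForm, map_smul, inner_smul_left, inner_smul_right, ← mul_assoc,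
    Complex.conj_mul', ← Complex.ofReal_pow, Complex.re_ofReal_mul]

lemma quadForm_add (A B : Matrix n n ℂ) (v : EuclideanSpace ℂ n) :
    quadForm (A + B) v = quadForm A v + quadForm B v := by
  simp [quadForm]

lemma quadForm_sub (A B : Matrix n n ℂ) (v : EuclideanSpace ℂ n) :
    quadForm (A - B) v = quadForm A v - quadForm B v := by
  simp [quadForm]

lemma quadForm_real_smul (r : ℝ) (A : Matrix n n ℂ) (v : EuclideanSpace ℂ n) :
    quadForm (r • A) v = r * quadForm A v := by
  rw [quadForm, quadForm, ← Complex.coe_smul, map_smul, LinearMap.smul_apply, inner_smul_right,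
    Complex.re_ofReal_mul]

lemma quadForm_one (v : EuclideanSpace ℂ n) : quadForm 1 v = ‖v‖ ^ 2 := by
  simp [quadForm, ← Complex.ofReal_pow]

lemma quadForm_zero_right (A : Matrix n n ℂ) : quadForm A 0 = 0 := by
  simp [quadForm]

lemma Matrix.PosDef.quadForm_pos {A : Matrix n n ℂ} (hA : A.PosDef) {v : EuclideanSpace ℂ n}
    (hv : v ≠ 0) : 0 < quadForm A v := by
  rw [quadForm_eq_re_dotProduct]
  exact hA.re_dotProduct_pos (by simpa using hv)

lemma Matrix.IsHermitian.posSemidef_iff_quadForm_nonneg {A : Matrix n n ℂ} (hA : A.IsHermitian) :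
    A.PosSemidef ↔ ∀ v, 0 ≤ quadForm A v := by
  simp_rw [← isPositive_toEuclideanLin_iff, LinearMap.IsPositive, isSymmetric_toEuclideanLin_iff,
    hA, true_and, quadForm, inner_re_symm]
  exact Iff.rfl

lemma Matrix.PosSemidef.quadForm_eq_zero_iff {A : Matrix n n ℂ} (hA : A.PosSemidef)
    (v : EuclideanSpace ℂ n) : quadForm A v = 0 ↔ A.toEuclideanLin v = 0 := by
  have him : (star v.ofLp ⬝ᵥ A *ᵥ v.ofLp).im = 0 := hA.isHermitian.im_star_dotProduct_mulVec_self _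
  rw [quadForm_eq_re_dotProduct, toLpLin_apply, WithLp.toLp_eq_zero,
    ← hA.dotProduct_mulVec_zero_iff, Complex.ext_iff]
  simp [him]

lemma mul_norm_sq_le_quadForm {A : Matrix n n ℂ} {lam : ℝ}
    (h : ∀ w ∈ sphere (0 : EuclideanSpace ℂ n) 1, lam ≤ quadForm A w) (v : EuclideanSpace ℂ n) :
    lam * ‖v‖ ^ 2 ≤ quadForm A v := by
  rcases eq_or_ne v 0 with rfl | hv
  · simp [quadForm_zero_right]
  have hv' : 0 < ‖v‖ := norm_pos_iff.mpr hv
  have := h ((‖v‖⁻¹ : ℂ) • v) (by simp [norm_smul, hv'.ne'])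
  rw [quadForm_smul] at this
  simp only [norm_inv, Complex.norm_real, norm_norm, inv_pow] at this
  rwa [le_inv_mul_iff₀ (by positivity), mul_comm] at this

lemma Matrix.IsHermitian.posSemidef_sub_smul_one {A : Matrix n n ℂ} (hA : A.IsHermitian) {lam : ℝ}
    (h : ∀ w ∈ sphere (0 : EuclideanSpace ℂ n) 1, lam ≤ quadForm A w) :
    (A - lam • (1 : Matrix n n ℂ)).PosSemidef := by
  rw [(hA.sub (isHermitian_one.smul (IsSelfAdjoint.all lam))).posSemidef_iff_quadForm_nonneg]
  intro v
  rw [quadForm_sub, quadForm_real_smul, quadForm_one]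
  linarith [mul_norm_sq_le_quadForm h v]

theorem Matrix.IsHermitian.isPreconnected_setOf_isMinOn_quadForm {A : Matrix n n ℂ}
    (hA : A.IsHermitian) : IsPreconnected
      {w ∈ sphere (0 : EuclideanSpace ℂ n) 1 | IsMinOn (quadForm A) (sphere 0 1) w} := by
  rcases eq_empty_or_nonempty
    {w ∈ sphere (0 : EuclideanSpace ℂ n) 1 | IsMinOn (quadForm A) (sphere 0 1) w} with h | h
  · rw [h]
    exact isPreconnected_empty
  obtain ⟨w₀, hw₀, hmin₀⟩ := h
  have hM := hA.posSemidef_sub_smul_one fun w hw => isMinOn_iff.mp hmin₀ w hw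
  have hset : {w ∈ sphere (0 : EuclideanSpace ℂ n) 1 | IsMinOn (quadForm A) (sphere 0 1) w} =
      sphere 0 1 ∩ LinearMap.ker (A - quadForm A w₀ • 1).toEuclideanLin := by
    ext w
    simp only [mem_ofPred_eq, mem_inter_iff, SetLike.mem_coe, LinearMap.mem_ker,
      ← hM.quadForm_eq_zero_iff, quadForm_sub, quadForm_real_smul, quadForm_one, isMinOn_iff]
    refine and_congr_right fun hw => ?_
    rw [mem_sphere_zero_iff_norm.mp hw]
    constructor
    · intro hmin
      linarith [hmin w₀ hw₀, isMinOn_iff.mp hmin₀ w hw]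
    · intro h x hx
      linarith [isMinOn_iff.mp hmin₀ x hx]
  rw [hset]
  exact Submodule.isPreconnected_sphere_inter _ 1

end QuadForm

theorem Matrix.PosSemidef.trace_mul_nonneg {m 𝕜 : Type*} [Fintype m] [RCLike 𝕜]
    {A B : Matrix m m 𝕜} (hA : A.PosSemidef) (hB : B.PosSemidef) : 0 ≤ (A * B).trace := by
  obtain ⟨k, v, rfl⟩ := posSemidef_iff_eq_sum_vecMulVec.mp hB
  rw [Matrix.mul_sum, trace_sum]
  refine Finset.sum_nonneg fun i _ => ?_
  rw [mul_vecMulVec, trace_vecMulVec, dotProduct_comm]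
  exact hA.dotProduct_mulVec_nonneg (v i)

section Relaxation

variable {n : Type*} [Fintype n] [DecidableEq n]

lemma re_trace_mul_vecMulVec (A : Matrix n n ℂ) (v : EuclideanSpace ℂ n) :
    (A * vecMulVec v.ofLp (star v.ofLp)).trace.re = quadForm A v := by
  rw [mul_vecMulVec, trace_vecMulVec]
  rfl

lemma re_trace_vecMulVec (v : EuclideanSpace ℂ n) :
    (vecMulVec v.ofLp (star v.ofLp)).trace.re = ‖v‖ ^ 2 := by
  simpa [quadForm_one] using re_trace_mul_vecMulVec 1 v

theorem mul_re_trace_le_one_of_posSemidef {A₁ A₂ Z : Matrix n n ℂ} {t lam : ℝ}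
    (ht : t ∈ Icc (0 : ℝ) 1) (hM : (t • A₁ + (1 - t) • A₂ - lam • 1).PosSemidef)
    (hZ : Z.PosSemidef) (h₁ : (A₁ * Z).trace.re ≤ 1) (h₂ : (A₂ * Z).trace.re ≤ 1) :
    lam * Z.trace.re ≤ 1 := by
  have h := (Complex.nonneg_iff.mp (hM.trace_mul_nonneg hZ)).1
  simp only [sub_mul, add_mul, smul_mul, one_mul, trace_sub, trace_add, trace_smul, Complex.sub_re,
    Complex.add_re, Complex.real_smul, Complex.re_ofReal_mul] at h
  nlinarith [ht.1, ht.2]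

theorem exists_dual_certificate [Nonempty n] {A₁ A₂ : Matrix n n ℂ} (hA₁ : A₁.PosDef)
    (hA₂ : A₂.PosDef) :
    ∃ t ∈ Icc (0 : ℝ) 1, ∃ lam > 0, (t • A₁ + (1 - t) • A₂ - lam • 1).PosSemidef ∧
      ∃ u ∈ sphere (0 : EuclideanSpace ℂ n) 1, quadForm A₁ u ≤ lam ∧ quadForm A₂ u ≤ lam := by
  have hpencil : ∀ t : ℝ,
      t • quadForm A₁ + (1 - t) • quadForm A₂ = quadForm (t • A₁ + (1 - t) • A₂) := fun t => by
    ext v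
    simp [quadForm_add, quadForm_real_smul]
  have hherm : ∀ t : ℝ, (t • A₁ + (1 - t) • A₂).IsHermitian := fun t =>
    (hA₁.isHermitian.smul (IsSelfAdjoint.all t)).add
      (hA₂.isHermitian.smul (IsSelfAdjoint.all (1 - t)))
  obtain ⟨t, ht, u, hu, hmin, h₁, h₂⟩ :=
    (isCompact_sphere (0 : EuclideanSpace ℂ n) 1).exists_isMinOn_pencil_of_isPreconnected
      (NormedSpace.sphere_nonempty.mpr zero_le_one) (continuous_quadForm A₁)
      (continuous_quadForm A₂) fun t _ => by
        rw [hpencil]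
        exact (hherm t).isPreconnected_setOf_isMinOn_quadForm
  rw [hpencil] at hmin h₁ h₂
  refine ⟨t, ht, _, ?_, (hherm t).posSemidef_sub_smul_one (isMinOn_iff.mp hmin), u, hu, h₁, h₂⟩
  exact (hA₁.quadForm_pos (ne_zero_of_mem_unit_sphere ⟨u, hu⟩)).trans_le h₁

theorem exists_rankOne_optimal {A₁ A₂ : Matrix n n ℂ} (hA₁ : A₁.PosDef) (hA₂ : A₂.PosDef) :
    ∃ v : EuclideanSpace ℂ n, quadForm A₁ v ≤ 1 ∧ quadForm A₂ v ≤ 1 ∧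
      ∀ Z : Matrix n n ℂ, Z.PosSemidef → (A₁ * Z).trace.re ≤ 1 → (A₂ * Z).trace.re ≤ 1 →
        Z.trace.re ≤ ‖v‖ ^ 2 := by
  cases isEmpty_or_nonempty n
  · exact ⟨0, by simp [quadForm_zero_right], by simp [quadForm_zero_right],
      fun Z _ _ _ => by simp [Matrix.trace]⟩
  obtain ⟨t, ht, lam, hlam, hM, u, hu, h₁, h₂⟩ := exists_dual_certificate hA₁ hA₂
  obtain ⟨c, hc⟩ : ∃ c : ℂ, ‖c‖ ^ 2 = lam⁻¹ := ⟨√lam⁻¹, by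
    rw [Complex.norm_real, Real.norm_eq_abs, sq_abs, Real.sq_sqrt (inv_nonneg.mpr hlam.le)]⟩
  have hle : ∀ {q : ℝ}, q ≤ lam → ‖c‖ ^ 2 * q ≤ 1 := fun hq => by
    rw [hc, inv_mul_le_one₀ hlam]
    exact hq
  refine ⟨c • u, by rw [quadForm_smul]; exact hle h₁, by rw [quadForm_smul]; exact hle h₂,
    fun Z hZ hZ₁ hZ₂ => ?_⟩
  rw [norm_smul, mul_pow, hc, mem_sphere_zero_iff_norm.mp hu, one_pow, mul_one,
    ← one_div, le_div_iff₀' hlam]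
  exact mul_re_trace_le_one_of_posSemidef ht hM hZ hZ₁ hZ₂

end Relaxation

/-- Tightness of the semidefinite relaxation of the QCQP with two
constraints: for Hermitian positive definite `A₁, A₂`, the SDP value
`sup {Tr Z : Z ⪰ 0, Tr(A₁Z) ≤ 1, Tr(A₂Z) ≤ 1}` equals the QCQP value
`sup {‖v‖² : v†A₁v ≤ 1, v†A₂v ≤ 1}`, and the common value is attained by a rank-one
feasible matrix `Z = v v†`. -/
theorem stmt14 {N : ℕ} (A₁ A₂ : Matrix (Fin N) (Fin N) ℂ)
    (hA₁ : A₁.PosDef) (hA₂ : A₂.PosDef) :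
    ∃ m : ℝ,
      IsGreatest {t : ℝ | ∃ Z : Matrix (Fin N) (Fin N) ℂ, Z.PosSemidef ∧
        ((A₁ * Z).trace).re ≤ 1 ∧ ((A₂ * Z).trace).re ≤ 1 ∧ t = (Z.trace).re} m ∧
      IsGreatest {t : ℝ | ∃ v : EuclideanSpace ℂ (Fin N),
        (inner ℂ v (Matrix.toEuclideanLin A₁ v) : ℂ).re ≤ 1 ∧
        (inner ℂ v (Matrix.toEuclideanLin A₂ v) : ℂ).re ≤ 1 ∧ t = ‖v‖ ^ 2} m ∧
      ∃ v : Fin N → ℂ,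
        (Matrix.vecMulVec v (star v)).PosSemidef ∧
        ((A₁ * Matrix.vecMulVec v (star v)).trace).re ≤ 1 ∧
        ((A₂ * Matrix.vecMulVec v (star v)).trace).re ≤ 1 ∧
        ((Matrix.vecMulVec v (star v)).trace).re = m := by
  obtain ⟨v, hv₁, hv₂, hopt⟩ := exists_rankOne_optimal hA₁ hA₂
  have hZ₁ := (re_trace_mul_vecMulVec A₁ v).trans_le hv₁
  have hZ₂ := (re_trace_mul_vecMulVec A₂ v).trans_le hv₂
  refine ⟨‖v‖ ^ 2, ⟨⟨_, posSemidef_vecMulVec_self_star _, hZ₁, hZ₂, (re_trace_vecMulVec v).symm⟩,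
    ?_⟩, ⟨⟨v, hv₁, hv₂, rfl⟩, ?_⟩,
    _, posSemidef_vecMulVec_self_star _, hZ₁, hZ₂, re_trace_vecMulVec v⟩
  · rintro _ ⟨Z, hZ, h₁, h₂, rfl⟩
    exact hopt Z hZ h₁ h₂
  · rintro _ ⟨w, hw₁, hw₂, rfl⟩
    rw [← re_trace_vecMulVec]
    exact hopt _ (posSemidef_vecMulVec_self_star _) ((re_trace_mul_vecMulVec A₁ w).trans_le hw₁)
      ((re_trace_mul_vecMulVec A₂ w).trans_le hw₂)
end

section
/- Let λ₁ > 0, λ₂ < 0, and ζ, P_min ∈ ℝ. Consider m = inf{(1+λ₁)x + (1+λ₂)y + ζ : x ≥ 0, y ≥ 0, λ₁ x + λ₂ y + ζ ≥ P_min}. Then the infimum is attained and: (i) if ζ ≥ P_min and λ₂ ≥ −1, then m = ζ; (ii) if ζ ≥ P_min and λ₂ < −1, then m = P_min + (ζ − P_min)/(−λ₂); (iii) if ζ < P_min, then m = P_min + (P_min − ζ)/λ₁. -/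
/-!
Weak duality for a linear program in two variables. For a multiplier `t ≥ 0` of the
constraint, the objective minus `t (λ₁ x + λ₂ y + ζ - P_min)` equals
`(1 + λ₁ - t λ₁) x + (1 + λ₂ - t λ₂) y + (1 - t) ζ + t P_min`; when both coefficients are
nonnegative this bounds the objective below by `(1 - t) ζ + t P_min` on the feasible set.
The three regimes use the multipliers `t = 0`, `t = 1 + 1/λ₂` and `t = 1 + 1/λ₁`, and the
bound is attained at the vertices `(0, 0)`, `(0, (ζ - P_min)/(-λ₂))` and
`((P_min - ζ)/λ₁, 0)` respectively.
-/

def lpValues (lam₁ lam₂ ζ Pmin : ℝ) : Set ℝ :=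
  {v | ∃ x y : ℝ, 0 ≤ x ∧ 0 ≤ y ∧
    Pmin ≤ lam₁ * x + lam₂ * y + ζ ∧ v = (1 + lam₁) * x + (1 + lam₂) * y + ζ}

section

variable {lam₁ lam₂ ζ Pmin : ℝ}

theorem dual_mem_lowerBounds_lpValues {t : ℝ} (ht : 0 ≤ t) (ht₁ : t * lam₁ ≤ 1 + lam₁)
    (ht₂ : t * lam₂ ≤ 1 + lam₂) :
    (1 - t) * ζ + t * Pmin ∈ lowerBounds (lpValues lam₁ lam₂ ζ Pmin) := by
  rintro v ⟨x, y, hx, hy, hc, rfl⟩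
  linarith [mul_nonneg hx (sub_nonneg.2 ht₁), mul_nonneg hy (sub_nonneg.2 ht₂),
    mul_nonneg ht (sub_nonneg.2 hc)]

theorem isLeast_lpValues_of_primal_dual {x y t v : ℝ} (hx : 0 ≤ x) (hy : 0 ≤ y)
    (hc : Pmin ≤ lam₁ * x + lam₂ * y + ζ) (ht : 0 ≤ t) (ht₁ : t * lam₁ ≤ 1 + lam₁)
    (ht₂ : t * lam₂ ≤ 1 + lam₂) (hprimal : (1 + lam₁) * x + (1 + lam₂) * y + ζ = v)
    (hdual : (1 - t) * ζ + t * Pmin = v) :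
    IsLeast (lpValues lam₁ lam₂ ζ Pmin) v :=
  ⟨⟨x, y, hx, hy, hc, hprimal.symm⟩, hdual ▸ dual_mem_lowerBounds_lpValues ht ht₁ ht₂⟩

end

/-- The reduced two-variable linear program of the DF power
minimization: `inf {(1+λ₁)x + (1+λ₂)y + ζ : x, y ≥ 0, λ₁x + λ₂y + ζ ≥ P_min}` is attained
and equals `ζ` if `ζ ≥ P_min, λ₂ ≥ −1`; `P_min + (ζ − P_min)/(−λ₂)` if
`ζ ≥ P_min, λ₂ < −1`; and `P_min + (P_min − ζ)/λ₁` if `ζ < P_min`. -/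
theorem stmt15 (lam₁ lam₂ ζ Pmin : ℝ) (hlam₁ : 0 < lam₁) (hlam₂ : lam₂ < 0)
    (S : Set ℝ)
    (hS : S = {v : ℝ | ∃ x y : ℝ, 0 ≤ x ∧ 0 ≤ y ∧
      Pmin ≤ lam₁ * x + lam₂ * y + ζ ∧ v = (1 + lam₁) * x + (1 + lam₂) * y + ζ}) :
    ((Pmin ≤ ζ ∧ -1 ≤ lam₂) → IsLeast S ζ) ∧
    ((Pmin ≤ ζ ∧ lam₂ < -1) → IsLeast S (Pmin + (ζ - Pmin) / (-lam₂))) ∧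
    (ζ < Pmin → IsLeast S (Pmin + (Pmin - ζ) / lam₁)) := by
  subst hS
  refine ⟨fun ⟨hζ, hlam₂'⟩ => ?_, fun ⟨hζ, hlam₂'⟩ => ?_, fun hζ => ?_⟩
  · exact isLeast_lpValues_of_primal_dual (x := 0) (y := 0) (t := 0) le_rfl le_rfl
      (by linarith) le_rfl (by linarith) (by linarith) (by ring) (by ring)
  · have hne : lam₂ ≠ 0 := hlam₂.ne
    have hinv : -1 < 1 / lam₂ := by rw [lt_div_iff_of_neg hlam₂]; linarith
    have hquot : lam₁ / lam₂ < 0 := div_neg_of_pos_of_neg hlam₁ hlam₂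
    have hvertex : lam₂ * ((ζ - Pmin) / -lam₂) = Pmin - ζ := by field_simp; ring
    refine isLeast_lpValues_of_primal_dual (x := 0) (y := (ζ - Pmin) / -lam₂)
      (t := 1 + 1 / lam₂) le_rfl (div_nonneg (by linarith) (by linarith)) (by linarith)
      (by linarith) ?_ ?_ ?_ ?_
    · rw [add_mul, one_div_mul_eq_div]; linarith
    · field_simp; linarith
    · field_simp; ring
    · field_simp; ring
  · have hquot : lam₂ / lam₁ < 0 := div_neg_of_neg_of_pos hlam₂ hlam₁
    have hvertex : lam₁ * ((Pmin - ζ) / lam₁) = Pmin - ζ := by field_simp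
    refine isLeast_lpValues_of_primal_dual (x := (Pmin - ζ) / lam₁) (y := 0)
      (t := 1 + 1 / lam₁) (div_nonneg (by linarith) hlam₁.le) le_rfl (by linarith)
      (by positivity) ?_ ?_ ?_ ?_
    · field_simp; linarith
    · rw [add_mul, one_div_mul_eq_div]; linarith
    · field_simp; ring
    · field_simp; ring
end

section
/- Let h, g ∈ ℂ^N be linearly independent, σ > 0, R₀ > 0, P_min ≥ 0, and h₀, g₀ ∈ ℂ with |h₀|² = 4^{R₀}|g₀|². Let ξ₁ > 0 be the unique positive eigenvalue of the operator M = h h† − 4^{R₀} g g† (i.e., M x = ⟨h, x⟩h − 4^{R₀}⟨g, x⟩g), and let v₁ be a unit eigenvector of M for ξ₁. Then the minimum of P_s + ‖w‖² over all P_s ≥ P_min and w ∈ ℂ^N satisfying σ² + P_s|h₀|² + |⟨h, w⟩|² = 4^{R₀}(σ² + P_s|g₀|² + |⟨g, w⟩|²) equals P_min + (4^{R₀} − 1)σ²/ξ₁, and it is attained at P_s = P_min, w = √((4^{R₀} − 1)σ²/ξ₁) · v₁. -/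
/-!
Write `Q w = ‖⟪h, w⟫‖² - 4^R₀ ‖⟪g, w⟫‖² = ⟪w, M w⟫`. Since `|h₀|² = 4^R₀ |g₀|²`, the constraint
does not involve `Pₛ` and reads `Q w = (4^R₀ - 1) σ²`. The eigenvalue `ξ₁` bounds `Q` on the unit
sphere: for `u ⊥ v₁` the cross terms vanish, `Q (β • v₁ + u) = ξ₁ ‖β‖² + Q u`, and `Q u ≤ 0`
because `Q` is nonpositive on the kernel of `⟪h, ·⟫`, which contains `⟪h, u⟫ • v₁ - ⟪h, v₁⟫ • u`.
Hence `‖w‖² ≥ (4^R₀ - 1) σ² / ξ₁`, with equality at the rescaled eigenvector.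
-/

open scoped ComplexConjugate InnerProductSpace

section

variable {𝕜 E : Type*} [RCLike 𝕜] [NormedAddCommGroup E] [InnerProductSpace 𝕜 E]

theorem norm_sq_sub_nonpos_of_conj_mul_eq {a ξ : ℝ} (ha : 0 ≤ a) (hξ : 0 < ξ) {c d e f : 𝕜}
    (hdf : ‖d‖ ^ 2 - a * ‖f‖ ^ 2 = ξ) (hcd : conj c * d = a * (conj e * f)) :
    ‖c‖ ^ 2 - a * ‖e‖ ^ 2 ≤ 0 := by
  have hcd' : c * conj d = a * (e * conj f) := by
    simpa using congrArg conj hcd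
  -- With `c, d, e, f = ⟪h, u⟫, ⟪h, v⟫, ⟪g, u⟫, ⟪g, v⟫`, this is the form evaluated at
  -- `c • v - d • u`, a vector on which `⟪h, ·⟫` vanishes.
  have key : (‖c‖ ^ 2 - a * ‖e‖ ^ 2) * ‖d‖ ^ 2 = -a * ‖c * f - d * e‖ ^ 2 - ξ * ‖c‖ ^ 2 := by
    apply RCLike.ofReal_injective (K := 𝕜)
    rw [← hdf]
    push_cast
    simp only [← RCLike.mul_conj, map_sub, map_mul]
    linear_combination (c * conj d) * hcd + (conj c * d) * hcd'
  have hd : 0 < ‖d‖ ^ 2 := by nlinarith [sq_nonneg ‖f‖]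
  nlinarith [sq_nonneg ‖c * f - d * e‖, sq_nonneg ‖c‖]

theorem norm_mul_add_sq_sub_eq {a ξ : ℝ} {β c d e f : 𝕜}
    (hdf : ‖d‖ ^ 2 - a * ‖f‖ ^ 2 = ξ) (hcd : conj c * d = a * (conj e * f)) :
    ‖β * d + c‖ ^ 2 - a * ‖β * f + e‖ ^ 2 = ξ * ‖β‖ ^ 2 + (‖c‖ ^ 2 - a * ‖e‖ ^ 2) := by
  have hcd' : c * conj d = a * (e * conj f) := by
    simpa using congrArg conj hcd
  apply RCLike.ofReal_injective (K := 𝕜)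
  rw [← hdf]
  push_cast
  simp only [← RCLike.mul_conj, map_add, map_mul]
  linear_combination β * hcd + conj β * hcd'

theorem conj_inner_mul_inner_sub_eq {h g v : E} {a ξ : ℝ}
    (heig : ⟪h, v⟫_𝕜 • h - (a : 𝕜) • ⟪g, v⟫_𝕜 • g = (ξ : 𝕜) • v) (y : E) :
    conj ⟪h, y⟫_𝕜 * ⟪h, v⟫_𝕜 - a * (conj ⟪g, y⟫_𝕜 * ⟪g, v⟫_𝕜) = ξ * ⟪y, v⟫_𝕜 := by
  have := congrArg (⟪y, ·⟫_𝕜) heig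
  simp only [inner_sub_right, inner_smul_right] at this
  rw [inner_conj_symm, inner_conj_symm]
  linear_combination this

theorem norm_inner_sq_sub_eq_of_eigen {h g v : E} {a ξ : ℝ} (hv : ‖v‖ = 1)
    (heig : ⟪h, v⟫_𝕜 • h - (a : 𝕜) • ⟪g, v⟫_𝕜 • g = (ξ : 𝕜) • v) :
    ‖⟪h, v⟫_𝕜‖ ^ 2 - a * ‖⟪g, v⟫_𝕜‖ ^ 2 = ξ := by
  have := conj_inner_mul_inner_sub_eq heig v
  rw [RCLike.conj_mul, RCLike.conj_mul, inner_self_eq_norm_sq_to_K, hv,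
    RCLike.ofReal_one, one_pow, mul_one] at this
  exact_mod_cast this

theorem norm_inner_sq_sub_le_of_eigen {h g v : E} {a ξ : ℝ} (ha : 0 ≤ a) (hξ : 0 < ξ)
    (hv : ‖v‖ = 1) (heig : ⟪h, v⟫_𝕜 • h - (a : 𝕜) • ⟪g, v⟫_𝕜 • g = (ξ : 𝕜) • v) (w : E) :
    ‖⟪h, w⟫_𝕜‖ ^ 2 - a * ‖⟪g, w⟫_𝕜‖ ^ 2 ≤ ξ * ‖w‖ ^ 2 := by
  set β := ⟪v, w⟫_𝕜
  set u := w - β • v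
  have hvu : ⟪v, u⟫_𝕜 = 0 := by
    simp [u, β, inner_sub_right, inner_smul_right, inner_self_eq_norm_sq_to_K, hv]
  have hw : w = β • v + u := by simp [u]
  have hdf := norm_inner_sq_sub_eq_of_eigen hv heig
  have hcd : conj ⟪h, u⟫_𝕜 * ⟪h, v⟫_𝕜 = a * (conj ⟪g, u⟫_𝕜 * ⟪g, v⟫_𝕜) := by
    have := conj_inner_mul_inner_sub_eq heig u
    rwa [inner_eq_zero_symm.mp hvu, mul_zero, sub_eq_zero] at this
  have hu := norm_sq_sub_nonpos_of_conj_mul_eq ha hξ hdf hcd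
  have hnorm : ‖β • v + u‖ ^ 2 = ‖β‖ ^ 2 + ‖u‖ ^ 2 := by
    rw [sq, norm_add_sq_eq_norm_sq_add_norm_sq_of_inner_eq_zero _ _
      (by rw [inner_smul_left, hvu, mul_zero]), norm_smul, hv, mul_one, sq, sq]
  rw [hw, inner_add_right, inner_add_right, inner_smul_right, inner_smul_right,
    norm_mul_add_sq_sub_eq hdf hcd, hnorm]
  nlinarith [sq_nonneg ‖u‖]

theorem norm_inner_sq_sub_smul_eq_of_eigen {h g v : E} {a ξ : ℝ} (hv : ‖v‖ = 1)
    (heig : ⟪h, v⟫_𝕜 • h - (a : 𝕜) • ⟪g, v⟫_𝕜 • g = (ξ : 𝕜) • v) (t : ℝ) :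
    ‖⟪h, (t : 𝕜) • v⟫_𝕜‖ ^ 2 - a * ‖⟪g, (t : 𝕜) • v⟫_𝕜‖ ^ 2 = t ^ 2 * ξ := by
  simp only [inner_smul_right, norm_mul, RCLike.norm_ofReal, mul_pow, sq_abs]
  rw [← norm_inner_sq_sub_eq_of_eigen hv heig]
  ring

end

theorem stmt16_general {N : ℕ} (h g : EuclideanSpace ℂ (Fin N))
    (σ R₀ Pmin : ℝ) (hR₀ : 0 < R₀)
    (h₀ g₀ : ℂ) (hdeg : ‖h₀‖ ^ 2 = (4 : ℝ) ^ R₀ * ‖g₀‖ ^ 2)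
    (M : EuclideanSpace ℂ (Fin N) → EuclideanSpace ℂ (Fin N))
    (hM : ∀ x, M x = (inner ℂ h x : ℂ) • h -
      (((4 : ℝ) ^ R₀ : ℝ) : ℂ) • ((inner ℂ g x : ℂ) • g))
    (ξ₁ : ℝ) (hξ₁ : 0 < ξ₁)
    (v₁ : EuclideanSpace ℂ (Fin N)) (hv₁ : ‖v₁‖ = 1) (heig : M v₁ = (ξ₁ : ℂ) • v₁)
    (w₀ : EuclideanSpace ℂ (Fin N))
    (hw₀ : w₀ = Real.sqrt (((4 : ℝ) ^ R₀ - 1) * σ ^ 2 / ξ₁) • v₁) :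
    IsLeast {t : ℝ | ∃ Ps : ℝ, ∃ w : EuclideanSpace ℂ (Fin N), Pmin ≤ Ps ∧
        σ ^ 2 + Ps * ‖h₀‖ ^ 2 + ‖(inner ℂ h w : ℂ)‖ ^ 2 =
          (4 : ℝ) ^ R₀ *
            (σ ^ 2 + Ps * ‖g₀‖ ^ 2 + ‖(inner ℂ g w : ℂ)‖ ^ 2) ∧
        t = Ps + ‖w‖ ^ 2}
      (Pmin + ((4 : ℝ) ^ R₀ - 1) * σ ^ 2 / ξ₁) ∧
    (σ ^ 2 + Pmin * ‖h₀‖ ^ 2 + ‖(inner ℂ h w₀ : ℂ)‖ ^ 2 =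
      (4 : ℝ) ^ R₀ *
        (σ ^ 2 + Pmin * ‖g₀‖ ^ 2 + ‖(inner ℂ g w₀ : ℂ)‖ ^ 2)) ∧
    Pmin + ‖w₀‖ ^ 2 = Pmin + ((4 : ℝ) ^ R₀ - 1) * σ ^ 2 / ξ₁ := by
  set a := (4 : ℝ) ^ R₀
  have ha : 1 < a := Real.one_lt_rpow (by norm_num) hR₀
  have hv₁M : ⟪h, v₁⟫_ℂ • h - (a : ℂ) • ⟪g, v₁⟫_ℂ • g = (ξ₁ : ℂ) • v₁ := (hM v₁).symm.trans heig
  set s := Real.sqrt ((a - 1) * σ ^ 2 / ξ₁)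
  have hs : s ^ 2 = (a - 1) * σ ^ 2 / ξ₁ := Real.sq_sqrt (by have := sq_nonneg σ; positivity)
  rw [hw₀, ← Complex.coe_smul]
  have hnorm₀ : ‖(s : ℂ) • v₁‖ ^ 2 = (a - 1) * σ ^ 2 / ξ₁ := by
    rw [norm_smul, hv₁, mul_one, Complex.norm_real, Real.norm_eq_abs, sq_abs, hs]
  have hconstr₀ : σ ^ 2 + Pmin * ‖h₀‖ ^ 2 + ‖⟪h, (s : ℂ) • v₁⟫_ℂ‖ ^ 2 =
      a * (σ ^ 2 + Pmin * ‖g₀‖ ^ 2 + ‖⟪g, (s : ℂ) • v₁⟫_ℂ‖ ^ 2) := by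
    have := norm_inner_sq_sub_smul_eq_of_eigen hv₁ hv₁M s
    rw [hs, div_mul_cancel₀ _ hξ₁.ne'] at this
    linear_combination this + Pmin * hdeg
  refine ⟨⟨⟨Pmin, _, le_rfl, hconstr₀, by rw [hnorm₀]⟩, ?_⟩, hconstr₀, by rw [hnorm₀]⟩
  rintro _ ⟨Ps, w, hPs, hw, rfl⟩
  have hbound := norm_inner_sq_sub_le_of_eigen (zero_lt_one.trans ha).le hξ₁ hv₁ hv₁M w
  have hw_ge : (a - 1) * σ ^ 2 / ξ₁ ≤ ‖w‖ ^ 2 := by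
    rw [div_le_iff₀ hξ₁]
    linear_combination hbound - hw + Ps * hdeg
  linarith

/-- DF total-power minimization under a secrecy rate constraint in the
degenerate case `|h₀|² = 4^{R₀}|g₀|²`: the minimum of `Pₛ + ‖w‖²` subject to
`σ² + Pₛ|h₀|² + |⟨h,w⟩|² = 4^{R₀}(σ² + Pₛ|g₀|² + |⟨g,w⟩|²)` and `Pₛ ≥ P_min` equals
`P_min + (4^{R₀} − 1)σ²/ξ₁`, attained at `Pₛ = P_min`, `w = √((4^{R₀} − 1)σ²/ξ₁)·v₁`,
where `ξ₁ > 0` is the positive eigenvalue of `M = h h† − 4^{R₀} g g†` with unit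
eigenvector `v₁`. -/
theorem stmt16 {N : ℕ} (h g : EuclideanSpace ℂ (Fin N))
    (hind : LinearIndependent ℂ ![h, g])
    (σ R₀ Pmin : ℝ) (hσ : 0 < σ) (hR₀ : 0 < R₀) (hPmin : 0 ≤ Pmin)
    (h₀ g₀ : ℂ) (hdeg : ‖h₀‖ ^ 2 = (4 : ℝ) ^ R₀ * ‖g₀‖ ^ 2)
    (M : EuclideanSpace ℂ (Fin N) → EuclideanSpace ℂ (Fin N))
    (hM : ∀ x, M x = (inner ℂ h x : ℂ) • h -
      (((4 : ℝ) ^ R₀ : ℝ) : ℂ) • ((inner ℂ g x : ℂ) • g))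
    (ξ₁ : ℝ) (hξ₁ : 0 < ξ₁)
    (v₁ : EuclideanSpace ℂ (Fin N)) (hv₁ : ‖v₁‖ = 1) (heig : M v₁ = (ξ₁ : ℂ) • v₁)
    (w₀ : EuclideanSpace ℂ (Fin N))
    (hw₀ : w₀ = Real.sqrt (((4 : ℝ) ^ R₀ - 1) * σ ^ 2 / ξ₁) • v₁) :
    IsLeast {t : ℝ | ∃ Ps : ℝ, ∃ w : EuclideanSpace ℂ (Fin N), Pmin ≤ Ps ∧
        σ ^ 2 + Ps * ‖h₀‖ ^ 2 + ‖(inner ℂ h w : ℂ)‖ ^ 2 =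
          (4 : ℝ) ^ R₀ *
            (σ ^ 2 + Ps * ‖g₀‖ ^ 2 + ‖(inner ℂ g w : ℂ)‖ ^ 2) ∧
        t = Ps + ‖w‖ ^ 2}
      (Pmin + ((4 : ℝ) ^ R₀ - 1) * σ ^ 2 / ξ₁) ∧
    (σ ^ 2 + Pmin * ‖h₀‖ ^ 2 + ‖(inner ℂ h w₀ : ℂ)‖ ^ 2 =
      (4 : ℝ) ^ R₀ *
        (σ ^ 2 + Pmin * ‖g₀‖ ^ 2 + ‖(inner ℂ g w₀ : ℂ)‖ ^ 2)) ∧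
    Pmin + ‖w₀‖ ^ 2 = Pmin + ((4 : ℝ) ^ R₀ - 1) * σ ^ 2 / ξ₁ :=
  stmt16_general h g σ R₀ Pmin hR₀ h₀ g₀ hdeg M hM ξ₁ hξ₁ v₁ hv₁ heig w₀ hw₀
end

section
/- Let h, g ∈ ℂ^N be linearly independent, σ > 0, R₀ > 0, P_min ≥ 0, and h₀, g₀ ∈ ℂ with 4^{R₀}|g₀|² ≠ |h₀|². Set ζ = (4^{R₀} − 1)σ²/(|h₀|² − 4^{R₀}|g₀|²) and R̃ = (h h† − 4^{R₀} g g†)/(4^{R₀}|g₀|² − |h₀|²), and let λ₁ > 0 and λ₂ < 0 be the two nonzero eigenvalues of R̃. Then the minimum of P_s + ‖w‖² over all P_s ≥ P_min and w ∈ ℂ^N satisfying σ² + P_s|h₀|² + |⟨h, w⟩|² = 4^{R₀}(σ² + P_s|g₀|² + |⟨g, w⟩|²) equals: ζ if ζ ≥ P_min and λ₂ ≥ −1; P_min + (ζ − P_min)/(−λ₂) if ζ ≥ P_min and λ₂ < −1; and P_min + (P_min − ζ)/λ₁ if ζ < P_min. -/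
/-!
Put `q w = re ⟪w, R̃ w⟫ = (|⟨h, w⟩|² − 4^{R₀}|⟨g, w⟩|²) / (4^{R₀}|g₀|² − |h₀|²)`; the rate
constraint then reads `q w = P_s − ζ`. The self-adjoint map `R̃` has range in the plane
`span {h, g}`, which is spanned by its two orthonormal eigenvectors `u₁, u₂`, so
`q w = λ₁ |⟨u₁, w⟩|² + λ₂ |⟨u₂, w⟩|²` and Bessel's inequality gives
`λ₂ ‖w‖² ≤ q w ≤ λ₁ ‖w‖²`, with equality along `u₂`, resp. `u₁`. What remains is to minimise
`P_s + s` over `P_s ≥ P_min`, `s ≥ 0`, `λ₂ s ≤ P_s − ζ ≤ λ₁ s`, a linear program in two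
variables whose optimum lies at `s = 0` or at `P_s = P_min`.
-/

open InnerProductSpace Module RCLike Submodule

section Rayleigh

variable {𝕜 E ι : Type*} [RCLike 𝕜] [NormedAddCommGroup E] [InnerProductSpace 𝕜 E]
  {T : E →ₗ[𝕜] E}

local notation "⟪" x ", " y "⟫" => inner 𝕜 x y

theorem LinearMap.exists_norm_eq_one_apply_eq_smul {x : E} {c : 𝕜} (hx : x ≠ 0)
    (hTx : T x = c • x) : ∃ u : E, ‖u‖ = 1 ∧ T u = c • u :=
  ⟨(‖x‖⁻¹ : 𝕜) • x, norm_smul_inv_norm hx, by rw [map_smul, hTx, smul_comm]⟩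

theorem orthonormal_pair {u v : E} (hu : ‖u‖ = 1) (hv : ‖v‖ = 1) (huv : ⟪u, v⟫ = 0) :
    Orthonormal 𝕜 ![u, v] := by
  rw [orthonormal_iff_ite]
  simp [Fin.forall_fin_two, inner_self_eq_norm_sq_to_K, hu, hv, huv, inner_eq_zero_symm.1 huv]

theorem LinearMap.span_range_eq_of_apply_eq_smul [Fintype ι] {V : Submodule 𝕜 E}
    [FiniteDimensional 𝕜 V] {v : ι → E} {c : ι → 𝕜} (hrange : LinearMap.range T ≤ V)
    (hv : LinearIndependent 𝕜 v) (hTv : ∀ i, T (v i) = c i • v i) (hc : ∀ i, c i ≠ 0)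
    (hV : finrank 𝕜 V = Fintype.card ι) : span 𝕜 (Set.range v) = V := by
  refine eq_of_le_of_finrank_eq (span_le.2 (Set.range_subset_iff.2 fun i ↦ hrange ?_))
    (by rw [finrank_span_eq_card hv, hV])
  exact ⟨(c i)⁻¹ • v i, by rw [map_smul, hTv, smul_smul, inv_mul_cancel₀ (hc i), one_smul]⟩

variable [Fintype ι] {v : ι → E} {μ : ι → ℝ}

theorem LinearMap.IsSymmetric.apply_eq_sum_of_orthonormal (hT : T.IsSymmetric)
    (hv : Orthonormal 𝕜 v) (hTv : ∀ i, T (v i) = (μ i : 𝕜) • v i)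
    (hrange : LinearMap.range T ≤ span 𝕜 (Set.range v)) (w : E) :
    T w = ∑ i, ((μ i : 𝕜) * ⟪v i, w⟫) • v i := by
  obtain ⟨c, hc⟩ := (mem_span_range_iff_exists_fun 𝕜).1 (hrange (LinearMap.mem_range_self T w))
  have hcoeff : ∀ i, c i = (μ i : 𝕜) * ⟪v i, w⟫ := fun i ↦ by
    rw [← hv.inner_right_fintype c i, hc, ← hT, hTv, inner_smul_left, conj_ofReal]
  simp only [← hc, hcoeff]

theorem LinearMap.IsSymmetric.re_inner_map_self_eq_sum (hT : T.IsSymmetric)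
    (hv : Orthonormal 𝕜 v) (hTv : ∀ i, T (v i) = (μ i : 𝕜) • v i)
    (hrange : LinearMap.range T ≤ span 𝕜 (Set.range v)) (w : E) :
    re ⟪w, T w⟫ = ∑ i, μ i * ‖⟪v i, w⟫‖ ^ 2 := by
  rw [hT.apply_eq_sum_of_orthonormal hv hTv hrange, inner_sum, map_sum]
  refine Finset.sum_congr rfl fun i _ ↦ ?_
  rw [inner_smul_right, ← inner_conj_symm w (v i), mul_assoc, mul_conj]
  norm_cast

theorem LinearMap.IsSymmetric.re_inner_map_self_le (hT : T.IsSymmetric)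
    (hv : Orthonormal 𝕜 v) (hTv : ∀ i, T (v i) = (μ i : 𝕜) • v i)
    (hrange : LinearMap.range T ≤ span 𝕜 (Set.range v)) {c : ℝ} (hc : 0 ≤ c) (hμ : ∀ i, μ i ≤ c)
    (w : E) : re ⟪w, T w⟫ ≤ c * ‖w‖ ^ 2 := by
  rw [hT.re_inner_map_self_eq_sum hv hTv hrange]
  calc ∑ i, μ i * ‖⟪v i, w⟫‖ ^ 2 ≤ ∑ i, c * ‖⟪v i, w⟫‖ ^ 2 := by gcongr with i; exact hμ i
    _ ≤ c * ‖w‖ ^ 2 := by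
      rw [← Finset.mul_sum]; exact mul_le_mul_of_nonneg_left (hv.sum_inner_products_le w) hc

theorem LinearMap.IsSymmetric.le_re_inner_map_self (hT : T.IsSymmetric)
    (hv : Orthonormal 𝕜 v) (hTv : ∀ i, T (v i) = (μ i : 𝕜) • v i)
    (hrange : LinearMap.range T ≤ span 𝕜 (Set.range v)) {c : ℝ} (hc : c ≤ 0) (hμ : ∀ i, c ≤ μ i)
    (w : E) : c * ‖w‖ ^ 2 ≤ re ⟪w, T w⟫ := by
  rw [hT.re_inner_map_self_eq_sum hv hTv hrange]
  calc c * ‖w‖ ^ 2 ≤ c * ∑ i, ‖⟪v i, w⟫‖ ^ 2 :=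
        mul_le_mul_of_nonpos_left (hv.sum_inner_products_le w) hc
    _ ≤ ∑ i, μ i * ‖⟪v i, w⟫‖ ^ 2 := by rw [Finset.mul_sum]; gcongr with i; exact hμ i

theorem LinearMap.exists_norm_sq_eq_re_inner_map_self_eq {x : E} {μ : ℝ} (hx : x ≠ 0)
    (hTx : T x = (μ : 𝕜) • x) {s : ℝ} (hs : 0 ≤ s) :
    ∃ w : E, ‖w‖ ^ 2 = s ∧ re ⟪w, T w⟫ = μ * s := by
  obtain ⟨u, hu, hTu⟩ := T.exists_norm_eq_one_apply_eq_smul hx hTx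
  refine ⟨(√s : 𝕜) • u, ?_, ?_⟩
  · rw [norm_smul, hu, mul_one, norm_ofReal, abs_of_nonneg (Real.sqrt_nonneg s), Real.sq_sqrt hs]
  · rw [map_smul, hTu, inner_smul_left, inner_smul_right, inner_smul_right,
      inner_self_eq_norm_sq_to_K, hu, conj_ofReal]
    norm_cast
    rw [← mul_assoc, Real.mul_self_sqrt hs]
    ring

theorem LinearMap.IsSymmetric.re_inner_map_self_mem_Icc (hT : T.IsSymmetric) {V : Submodule 𝕜 E}
    [FiniteDimensional 𝕜 V] (hrange : LinearMap.range T ≤ V) (hV : finrank 𝕜 V = 2)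
    {μ₁ μ₂ : ℝ} (hμ₁ : 0 < μ₁) (hμ₂ : μ₂ < 0) {x₁ x₂ : E} (hx₁ : x₁ ≠ 0)
    (hTx₁ : T x₁ = (μ₁ : 𝕜) • x₁) (hx₂ : x₂ ≠ 0) (hTx₂ : T x₂ = (μ₂ : 𝕜) • x₂) (w : E) :
    re ⟪w, T w⟫ ∈ Set.Icc (μ₂ * ‖w‖ ^ 2) (μ₁ * ‖w‖ ^ 2) := by
  obtain ⟨u₁, hu₁, hTu₁⟩ := T.exists_norm_eq_one_apply_eq_smul hx₁ hTx₁
  obtain ⟨u₂, hu₂, hTu₂⟩ := T.exists_norm_eq_one_apply_eq_smul hx₂ hTx₂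
  have hu : Orthonormal 𝕜 ![u₁, u₂] := orthonormal_pair hu₁ hu₂
    (hT.orthogonalFamily_eigenspaces (ofReal_injective.ne (hμ₂.trans hμ₁).ne')
      ⟨u₁, Module.End.mem_eigenspace_iff.2 hTu₁⟩ ⟨u₂, Module.End.mem_eigenspace_iff.2 hTu₂⟩)
  have hTu : ∀ i, T (![u₁, u₂] i) = ((![μ₁, μ₂] i : ℝ) : 𝕜) • ![u₁, u₂] i :=
    Fin.forall_fin_two.2 ⟨hTu₁, hTu₂⟩
  have hspan : span 𝕜 (Set.range ![u₁, u₂]) = V :=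
    T.span_range_eq_of_apply_eq_smul hrange hu.linearIndependent hTu
      (Fin.forall_fin_two.2 ⟨ofReal_ne_zero.2 hμ₁.ne', ofReal_ne_zero.2 hμ₂.ne⟩) hV
  have hμ : μ₂ ≤ μ₁ := (hμ₂.trans hμ₁).le
  exact ⟨hT.le_re_inner_map_self hu hTu (hspan ▸ hrange) hμ₂.le
      (Fin.forall_fin_two.2 ⟨hμ, le_rfl⟩) w,
    hT.re_inner_map_self_le hu hTu (hspan ▸ hrange) hμ₁.le (Fin.forall_fin_two.2 ⟨le_rfl, hμ⟩) w⟩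

end Rayleigh

section RankOneDiff

variable {𝕜 E : Type*} [RCLike 𝕜] [NormedAddCommGroup E] [InnerProductSpace 𝕜 E]

local notation "⟪" x ", " y "⟫" => inner 𝕜 x y

variable (𝕜) in
/-- `(h h† − α g g†) / d`; the paper's `R̃` is the case `α = 4^{R₀}`, `d = 4^{R₀}|g₀|² − |h₀|²`. -/
noncomputable def rankOneDiff (d α : ℝ) (h g : E) : E →ₗ[𝕜] E :=
  (d : 𝕜)⁻¹ • ((rankOne 𝕜 h h : E →ₗ[𝕜] E) - (α : 𝕜) • (rankOne 𝕜 g g : E →ₗ[𝕜] E))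

variable {d α : ℝ} {h g : E}

theorem rankOneDiff_apply (x : E) :
    rankOneDiff 𝕜 d α h g x = (d : 𝕜)⁻¹ • (⟪h, x⟫ • h - (α : 𝕜) • (⟪g, x⟫ • g)) := rfl

theorem isSymmetric_rankOneDiff : (rankOneDiff 𝕜 d α h g).IsSymmetric :=
  ((isSymmetric_rankOne_self h).sub ((isSymmetric_rankOne_self g).smul (conj_ofReal α))).smul
    (by rw [map_inv₀, conj_ofReal])

theorem range_rankOneDiff_le :
    LinearMap.range (rankOneDiff 𝕜 d α h g) ≤ span 𝕜 (Set.range ![h, g]) := by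
  rintro _ ⟨x, rfl⟩
  rw [rankOneDiff_apply]
  refine smul_mem _ _ (sub_mem (smul_mem _ _ (subset_span ⟨0, rfl⟩))
    (smul_mem _ _ (smul_mem _ _ (subset_span ⟨1, rfl⟩))))

theorem re_inner_rankOneDiff_self (w : E) :
    re ⟪w, rankOneDiff 𝕜 d α h g w⟫ = (‖⟪h, w⟫‖ ^ 2 - α * ‖⟪g, w⟫‖ ^ 2) / d := by
  rw [rankOneDiff_apply, inner_smul_right, inner_sub_right, inner_smul_right, inner_smul_right,
    inner_smul_right, ← inner_conj_symm w h, ← inner_conj_symm w g, mul_conj, mul_conj]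
  norm_cast
  rw [div_eq_inv_mul]

end RankOneDiff

section PowerMinimization

variable {X : Type*} [Norm X] {q : X → ℝ} {Pmin ζ μ : ℝ}

def powerFeasibleSet (q : X → ℝ) (Pmin ζ : ℝ) : Set ℝ :=
  {t | ∃ Ps : ℝ, ∃ w : X, Pmin ≤ Ps ∧ q w = Ps - ζ ∧ t = Ps + ‖w‖ ^ 2}

theorem isLeast_powerFeasibleSet_of_neg_one_le (hq : ∀ w, μ * ‖w‖ ^ 2 ≤ q w)
    (hμ : ∀ s, 0 ≤ s → ∃ w, ‖w‖ ^ 2 = s ∧ q w = μ * s) (hζ : Pmin ≤ ζ) (hμ₁ : -1 ≤ μ) :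
    IsLeast (powerFeasibleSet q Pmin ζ) ζ := by
  obtain ⟨w₀, hw₀, hqw₀⟩ := hμ 0 le_rfl
  refine ⟨⟨ζ, w₀, hζ, by rw [hqw₀, mul_zero, sub_self], by rw [hw₀, add_zero]⟩, ?_⟩
  rintro _ ⟨Ps, w, -, hw, rfl⟩
  nlinarith [hq w, mul_nonneg (neg_le_iff_add_nonneg'.1 hμ₁) (sq_nonneg ‖w‖)]

theorem isLeast_powerFeasibleSet_of_lt_neg_one (hq : ∀ w, μ * ‖w‖ ^ 2 ≤ q w)
    (hμ : ∀ s, 0 ≤ s → ∃ w, ‖w‖ ^ 2 = s ∧ q w = μ * s) (hζ : Pmin ≤ ζ) (hμ₁ : μ < -1) :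
    IsLeast (powerFeasibleSet q Pmin ζ) (Pmin + (ζ - Pmin) / -μ) := by
  have hμ₀ : 0 < -μ := by linarith
  obtain ⟨w₀, hw₀, hqw₀⟩ := hμ ((ζ - Pmin) / -μ) (div_nonneg (sub_nonneg.2 hζ) hμ₀.le)
  refine ⟨⟨Pmin, w₀, le_rfl, ?_, by rw [hw₀]⟩, ?_⟩
  · rw [hqw₀]; field_simp [show μ ≠ 0 by linarith]; ring
  rintro _ ⟨Ps, w, hPs, hw, rfl⟩
  have : (ζ - Pmin) / -μ ≤ Ps - Pmin + ‖w‖ ^ 2 := by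
    rw [div_le_iff₀ hμ₀]; nlinarith [hq w]
  linarith

theorem isLeast_powerFeasibleSet_of_lt (hq : ∀ w, q w ≤ μ * ‖w‖ ^ 2)
    (hμ : ∀ s, 0 ≤ s → ∃ w, ‖w‖ ^ 2 = s ∧ q w = μ * s) (hζ : ζ < Pmin) (hμ₀ : 0 < μ) :
    IsLeast (powerFeasibleSet q Pmin ζ) (Pmin + (Pmin - ζ) / μ) := by
  obtain ⟨w₀, hw₀, hqw₀⟩ := hμ ((Pmin - ζ) / μ) (div_nonneg (sub_nonneg.2 hζ.le) hμ₀.le)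
  refine ⟨⟨Pmin, w₀, le_rfl, ?_, by rw [hw₀]⟩, ?_⟩
  · rw [hqw₀]; field_simp
  rintro _ ⟨Ps, w, hPs, hw, rfl⟩
  have : (Pmin - ζ) / μ ≤ Ps - Pmin + ‖w‖ ^ 2 := by
    rw [div_le_iff₀ hμ₀]; nlinarith [hq w]
  linarith

end PowerMinimization

theorem rate_constraint_iff {A B a b α σ P : ℝ} (hAB : α * B ≠ A) :
    σ ^ 2 + P * A + a = α * (σ ^ 2 + P * B + b) ↔
      (a - α * b) / (α * B - A) = P - (α - 1) * σ ^ 2 / (A - α * B) := by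
  have h₁ : α * B - A ≠ 0 := sub_ne_zero.2 hAB
  have h₂ : A - α * B ≠ 0 := sub_ne_zero.2 hAB.symm
  rw [div_eq_iff h₁, sub_mul, mul_comm_div, ← neg_sub A, neg_div_self h₂]
  constructor <;> intro H <;> linarith

theorem stmt17_general {N : ℕ} (h g : EuclideanSpace ℂ (Fin N))
    (hind : LinearIndependent ℂ ![h, g])
    (σ R₀ Pmin : ℝ)
    (h₀ g₀ : ℂ) (hne : (4 : ℝ) ^ R₀ * ‖g₀‖ ^ 2 ≠ ‖h₀‖ ^ 2)
    (ζ : ℝ) (hζ : ζ = ((4 : ℝ) ^ R₀ - 1) * σ ^ 2 /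
      (‖h₀‖ ^ 2 - (4 : ℝ) ^ R₀ * ‖g₀‖ ^ 2))
    (Rt : EuclideanSpace ℂ (Fin N) → EuclideanSpace ℂ (Fin N))
    (hRt : ∀ x, Rt x =
      ((((4 : ℝ) ^ R₀ * ‖g₀‖ ^ 2 - ‖h₀‖ ^ 2 : ℝ) : ℂ))⁻¹ •
        ((inner ℂ h x : ℂ) • h - (((4 : ℝ) ^ R₀ : ℝ) : ℂ) • ((inner ℂ g x : ℂ) • g)))
    (lam₁ lam₂ : ℝ) (hlam₁pos : 0 < lam₁) (hlam₂neg : lam₂ < 0)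
    (heig₁ : ∃ x : EuclideanSpace ℂ (Fin N), x ≠ 0 ∧ Rt x = (lam₁ : ℂ) • x)
    (heig₂ : ∃ x : EuclideanSpace ℂ (Fin N), x ≠ 0 ∧ Rt x = (lam₂ : ℂ) • x)
    (S : Set ℝ)
    (hS : S = {t : ℝ | ∃ Ps : ℝ, ∃ w : EuclideanSpace ℂ (Fin N), Pmin ≤ Ps ∧
      σ ^ 2 + Ps * ‖h₀‖ ^ 2 + ‖(inner ℂ h w : ℂ)‖ ^ 2 =
        (4 : ℝ) ^ R₀ *
          (σ ^ 2 + Ps * ‖g₀‖ ^ 2 + ‖(inner ℂ g w : ℂ)‖ ^ 2) ∧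
      t = Ps + ‖w‖ ^ 2}) :
    ((Pmin ≤ ζ ∧ -1 ≤ lam₂) → IsLeast S ζ) ∧
    ((Pmin ≤ ζ ∧ lam₂ < -1) → IsLeast S (Pmin + (ζ - Pmin) / (-lam₂))) ∧
    (ζ < Pmin → IsLeast S (Pmin + (Pmin - ζ) / lam₁)) := by
  set T := rankOneDiff ℂ ((4 : ℝ) ^ R₀ * ‖g₀‖ ^ 2 - ‖h₀‖ ^ 2) ((4 : ℝ) ^ R₀) h g
  obtain rfl : Rt = T := funext hRt
  obtain ⟨x₁, hx₁, hTx₁⟩ := heig₁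
  obtain ⟨x₂, hx₂, hTx₂⟩ := heig₂
  have hbounds := isSymmetric_rankOneDiff.re_inner_map_self_mem_Icc range_rankOneDiff_le
    (by rw [finrank_span_eq_card hind, Fintype.card_fin]) hlam₁pos hlam₂neg hx₁ hTx₁ hx₂ hTx₂
  have hS' : S = powerFeasibleSet (fun w ↦ re (inner ℂ w (T w))) Pmin ζ := by
    simp only [hS, hζ, powerFeasibleSet, T, re_inner_rankOneDiff_self, rate_constraint_iff hne]
  subst hS'
  refine ⟨fun ⟨hζ, hlam⟩ ↦ ?_, fun ⟨hζ, hlam⟩ ↦ ?_, fun hζ ↦ ?_⟩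
  · exact isLeast_powerFeasibleSet_of_neg_one_le (fun w ↦ (hbounds w).1)
      (fun _ ↦ T.exists_norm_sq_eq_re_inner_map_self_eq hx₂ hTx₂) hζ hlam
  · exact isLeast_powerFeasibleSet_of_lt_neg_one (fun w ↦ (hbounds w).1)
      (fun _ ↦ T.exists_norm_sq_eq_re_inner_map_self_eq hx₂ hTx₂) hζ hlam
  · exact isLeast_powerFeasibleSet_of_lt (fun w ↦ (hbounds w).2)
      (fun _ ↦ T.exists_norm_sq_eq_re_inner_map_self_eq hx₁ hTx₁) hζ hlam₁pos

/-- DF total-power minimization under a secrecy rate constraint in the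
generic case `4^{R₀}|g₀|² ≠ |h₀|²`: with `ζ = (4^{R₀} − 1)σ²/(|h₀|² − 4^{R₀}|g₀|²)`,
`R̃ = (h h† − 4^{R₀} g g†)/(4^{R₀}|g₀|² − |h₀|²)` with positive/negative eigenvalues
`λ₁ > 0 > λ₂`, the minimum total power equals `ζ` if `ζ ≥ P_min, λ₂ ≥ −1`;
`P_min + (ζ − P_min)/(−λ₂)` if `ζ ≥ P_min, λ₂ < −1`; and `P_min + (P_min − ζ)/λ₁`
if `ζ < P_min`. -/
theorem stmt17 {N : ℕ} (h g : EuclideanSpace ℂ (Fin N))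
    (hind : LinearIndependent ℂ ![h, g])
    (σ R₀ Pmin : ℝ) (hσ : 0 < σ) (hR₀ : 0 < R₀) (hPmin : 0 ≤ Pmin)
    (h₀ g₀ : ℂ) (hne : (4 : ℝ) ^ R₀ * ‖g₀‖ ^ 2 ≠ ‖h₀‖ ^ 2)
    (ζ : ℝ) (hζ : ζ = ((4 : ℝ) ^ R₀ - 1) * σ ^ 2 /
      (‖h₀‖ ^ 2 - (4 : ℝ) ^ R₀ * ‖g₀‖ ^ 2))
    (Rt : EuclideanSpace ℂ (Fin N) → EuclideanSpace ℂ (Fin N))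
    (hRt : ∀ x, Rt x =
      ((((4 : ℝ) ^ R₀ * ‖g₀‖ ^ 2 - ‖h₀‖ ^ 2 : ℝ) : ℂ))⁻¹ •
        ((inner ℂ h x : ℂ) • h - (((4 : ℝ) ^ R₀ : ℝ) : ℂ) • ((inner ℂ g x : ℂ) • g)))
    (lam₁ lam₂ : ℝ) (hlam₁pos : 0 < lam₁) (hlam₂neg : lam₂ < 0)
    (heig₁ : ∃ x : EuclideanSpace ℂ (Fin N), x ≠ 0 ∧ Rt x = (lam₁ : ℂ) • x)
    (heig₂ : ∃ x : EuclideanSpace ℂ (Fin N), x ≠ 0 ∧ Rt x = (lam₂ : ℂ) • x)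
    (S : Set ℝ)
    (hS : S = {t : ℝ | ∃ Ps : ℝ, ∃ w : EuclideanSpace ℂ (Fin N), Pmin ≤ Ps ∧
      σ ^ 2 + Ps * ‖h₀‖ ^ 2 + ‖(inner ℂ h w : ℂ)‖ ^ 2 =
        (4 : ℝ) ^ R₀ *
          (σ ^ 2 + Ps * ‖g₀‖ ^ 2 + ‖(inner ℂ g w : ℂ)‖ ^ 2) ∧
      t = Ps + ‖w‖ ^ 2}) :
    ((Pmin ≤ ζ ∧ -1 ≤ lam₂) → IsLeast S ζ) ∧
    ((Pmin ≤ ζ ∧ lam₂ < -1) → IsLeast S (Pmin + (ζ - Pmin) / (-lam₂))) ∧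
    (ζ < Pmin → IsLeast S (Pmin + (Pmin - ζ) / lam₁)) :=
  stmt17_general h g hind σ R₀ Pmin h₀ g₀ hne ζ hζ Rt hRt lam₁ lam₂ hlam₁pos hlam₂neg heig₁ heig₂ S
    hS
end

section
/- Let α₂, α₃, α₄ > 0 and ρ ∈ (0, 1), and set d = α₃(1 − ρ²). Define Q(γ) = α₂(γ d + α₄)/(γ d + α₄ − α₂) + γ on the domain D = {γ ≥ 0 : γ d + α₄ − α₂ > 0}. Then Q attains its minimum over D at γ* where: γ* = 0 if α₄/α₂ > 1 + √d, and γ* = (α₂√d + α₂ − α₄)/d otherwise; in the second case γ* ≥ 0 and γ* d + α₄ − α₂ = α₂√d > 0. -/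
/-!
Writing `B = γd + α₄ − α₂` for the margin, `Q = α₂ + (α₂ − α₄)/d + (α₂²/B + B/d)`, and
`B ↦ α₂²/B + B/d` is minimised at `B = α₂√d` (AM-GM) and increasing beyond it. The constraint
`γ ≥ 0` reads `B ≥ α₄ − α₂`, so the optimum is `B = α₂√d` when that is feasible and the
boundary `γ = 0` otherwise.
-/

open Real

lemma isMinOn_sq_div_add_div {d : ℝ} (hd : 0 < d) (a : ℝ) :
    IsMinOn (fun x => a ^ 2 / x + x / d) (Set.Ioi 0) (a * √d) := by
  intro x (hx : 0 < x)
  have hs : 0 < √d := sqrt_pos.mpr hd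
  have hss : √d * √d = d := mul_self_sqrt hd.le
  have hmin : a ^ 2 / (a * √d) + a * √d / d = 2 * a / √d := by
    rcases eq_or_ne a 0 with rfl | ha
    · simp
    · field_simp
      rw [sq_sqrt hd.le]; ring
  show a ^ 2 / (a * √d) + a * √d / d ≤ a ^ 2 / x + x / d
  rw [hmin, div_add_div _ _ hx.ne' hd.ne', div_le_div_iff₀ hs (by positivity)]
  nlinarith [mul_nonneg hs.le (sq_nonneg (x - a * √d))]

lemma monotoneOn_sq_div_add_div {a d : ℝ} (hd : 0 < d) (ha : 0 < a) :
    MonotoneOn (fun x => a ^ 2 / x + x / d) (Set.Ici (a * √d)) := by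
  intro x (hx : a * √d ≤ x) y _ hxy
  have hs : 0 < √d := sqrt_pos.mpr hd
  have hx0 : 0 < x := (mul_pos ha hs).trans_le hx
  have hprod : a ^ 2 * d ≤ x * y := by
    rw [← mul_self_sqrt hd.le]; nlinarith [mul_pos ha hs]
  show a ^ 2 / x + x / d ≤ a ^ 2 / y + y / d
  -- the difference of the two sides is `(y - x) (x y - a² d) / (d x y)`
  rw [div_add_div _ _ hx0.ne' hd.ne', div_add_div _ _ (hx0.trans_le hxy).ne' hd.ne',
    div_le_div_iff₀ (by positivity) (by nlinarith)]
  nlinarith [mul_nonneg (sub_nonneg.mpr hxy) (sub_nonneg.mpr hprod), mul_pos hx0 hd]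

lemma mul_div_add_eq_sq_div_add_div {a b d γ : ℝ} (hd : d ≠ 0) (hB : γ * d + b - a ≠ 0) :
    a * (γ * d + b) / (γ * d + b - a) + γ =
      a + (a - b) / d + (a ^ 2 / (γ * d + b - a) + (γ * d + b - a) / d) := by
  field_simp
  ring

theorem stmt18_general (α₂ α₃ α₄ ρ : ℝ) (hα₂ : 0 < α₂) (hα₃ : 0 < α₃)
    (hρ0 : 0 < ρ) (hρ1 : ρ < 1)
    (d : ℝ) (hd : d = α₃ * (1 - ρ ^ 2))
    (Q : ℝ → ℝ) (hQ : ∀ γ, Q γ = α₂ * (γ * d + α₄) / (γ * d + α₄ - α₂) + γ) :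
    ((1 + Real.sqrt d < α₄ / α₂) →
      (0 ≤ (0 : ℝ) ∧ 0 < 0 * d + α₄ - α₂ ∧
        ∀ γ : ℝ, 0 ≤ γ → 0 < γ * d + α₄ - α₂ → Q 0 ≤ Q γ)) ∧
    (¬ (1 + Real.sqrt d < α₄ / α₂) →
      (0 ≤ (α₂ * Real.sqrt d + α₂ - α₄) / d ∧
        ((α₂ * Real.sqrt d + α₂ - α₄) / d) * d + α₄ - α₂ = α₂ * Real.sqrt d ∧
        0 < α₂ * Real.sqrt d ∧
        ∀ γ : ℝ, 0 ≤ γ → 0 < γ * d + α₄ - α₂ →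
          Q ((α₂ * Real.sqrt d + α₂ - α₄) / d) ≤ Q γ)) := by
  have hd0 : 0 < d := hd ▸ mul_pos hα₃ (by nlinarith)
  have hs : 0 < α₂ * √d := mul_pos hα₂ (sqrt_pos.mpr hd0)
  have hQB : ∀ γ, 0 < γ * d + α₄ - α₂ → Q γ = α₂ + (α₂ - α₄) / d +
      (α₂ ^ 2 / (γ * d + α₄ - α₂) + (γ * d + α₄ - α₂) / d) := fun γ hγ =>
    (hQ γ).trans (mul_div_add_eq_sq_div_add_div hd0.ne' hγ.ne')
  refine ⟨fun hcase => ?_, fun hcase => ?_⟩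
  · have hmargin : α₂ * √d < 0 * d + α₄ - α₂ := by
      rw [lt_div_iff₀ hα₂] at hcase; linarith
    refine ⟨le_rfl, hs.trans hmargin, fun γ hγ hγB => ?_⟩
    rw [hQB 0 (hs.trans hmargin), hQB γ hγB, add_le_add_iff_left]
    exact monotoneOn_sq_div_add_div hd0 hα₂ hmargin.le (hmargin.le.trans (by nlinarith))
      (by nlinarith)
  · rw [not_lt, div_le_iff₀ hα₂] at hcase
    have hopt : (α₂ * √d + α₂ - α₄) / d * d + α₄ - α₂ = α₂ * √d := by
      field_simp; ring
    refine ⟨div_nonneg (by linarith) hd0.le, hopt, hs, fun γ _ hγB => ?_⟩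
    rw [hQB _ (hopt.symm ▸ hs), hQB γ hγB, add_le_add_iff_left, hopt]
    exact isMinOn_sq_div_add_div hd0 α₂ hγB

/-- Suboptimal cooperative-jamming total-power minimization (nulling
the jamming at the destination): `Q(γ) = α₂(γd + α₄)/(γd + α₄ − α₂) + γ` attains its
minimum over `D = {γ ≥ 0 : γd + α₄ − α₂ > 0}` at `γ* = 0` if `α₄/α₂ > 1 + √d`, and at
`γ* = (α₂√d + α₂ − α₄)/d` otherwise, in which case `γ* ≥ 0` and
`γ*d + α₄ − α₂ = α₂√d > 0`. -/
theorem stmt18 (α₂ α₃ α₄ ρ : ℝ) (hα₂ : 0 < α₂) (hα₃ : 0 < α₃) (hα₄ : 0 < α₄)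
    (hρ0 : 0 < ρ) (hρ1 : ρ < 1)
    (d : ℝ) (hd : d = α₃ * (1 - ρ ^ 2))
    (Q : ℝ → ℝ) (hQ : ∀ γ, Q γ = α₂ * (γ * d + α₄) / (γ * d + α₄ - α₂) + γ) :
    ((1 + Real.sqrt d < α₄ / α₂) →
      (0 ≤ (0 : ℝ) ∧ 0 < 0 * d + α₄ - α₂ ∧
        ∀ γ : ℝ, 0 ≤ γ → 0 < γ * d + α₄ - α₂ → Q 0 ≤ Q γ)) ∧
    (¬ (1 + Real.sqrt d < α₄ / α₂) →
      (0 ≤ (α₂ * Real.sqrt d + α₂ - α₄) / d ∧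
        ((α₂ * Real.sqrt d + α₂ - α₄) / d) * d + α₄ - α₂ = α₂ * Real.sqrt d ∧
        0 < α₂ * Real.sqrt d ∧
        ∀ γ : ℝ, 0 ≤ γ → 0 < γ * d + α₄ - α₂ →
          Q ((α₂ * Real.sqrt d + α₂ - α₄) / d) ≤ Q γ)) :=
  stmt18_general α₂ α₃ α₄ ρ hα₂ hα₃ hρ0 hρ1 d hd Q hQ
end

section
/- Let ρ ∈ (0, 1), γ > 0, and α₁, α₂, α₃, α₄ > 0, define G_ρ(z) = 1 − (ρ√(1−z) − √((1−ρ²)z))² for z ∈ [0, 1], and define f(z) = 1/(γ α₁ z + α₂) − 1/(γ α₃ G_ρ(z) + α₄) for z ∈ (0, 1). If z′ ∈ (0, 1) satisfies f′(z′) = 0 and γ α₁ z′ + α₂ < γ α₃ G_ρ(z′) + α₄, then f″(z′) < 0. -/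
/-!
Write `f = 1/A − 1/B` with `A(z) = γα₁z + α₂` and `B(z) = γα₃G_ρ(z) + α₄`. At a stationary point
`A'/A² = B'/B² =: s`, and substituting this into `f'' = −A''/A² + 2A'²/A³ + B''/B² − 2B'²/B³` gives
`f'' = −A''/A² + B''/B² + 2s²(A − B)`. Here `A'' = 0` and `A < B`, so the sign is decided by
`B'' = γα₃G_ρ''`. Expanding the square, `G_ρ(z) = 1 − ρ² + (2ρ² − 1)z + 2ρ√(1 − ρ²)·√(z(1 − z))`,
and `(√(z(1 − z)))'' = −1/(4(z(1 − z))^{3/2}) < 0`.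
-/

open Filter Topology

section InvSubInv

variable {A B A' B' : ℝ → ℝ} {x a₁ b₁ a₂ b₂ : ℝ}

theorem hasDerivAt_inv_sub_inv (hA : HasDerivAt A a₁ x) (hB : HasDerivAt B b₁ x)
    (hA0 : A x ≠ 0) (hB0 : B x ≠ 0) :
    HasDerivAt (fun y => (A y)⁻¹ - (B y)⁻¹) (-a₁ / A x ^ 2 + b₁ / B x ^ 2) x :=
  ((hA.inv hA0).sub (hB.inv hB0)).congr_deriv (by ring)

theorem hasDerivAt_deriv_inv_sub_inv (hA : ∀ᶠ y in 𝓝 x, HasDerivAt A (A' y) y)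
    (hB : ∀ᶠ y in 𝓝 x, HasDerivAt B (B' y) y) (hA' : HasDerivAt A' a₂ x)
    (hB' : HasDerivAt B' b₂ x) (hA0 : A x ≠ 0) (hB0 : B x ≠ 0) :
    HasDerivAt (deriv fun y => (A y)⁻¹ - (B y)⁻¹)
      ((2 * A' x ^ 2 - A x * a₂) / A x ^ 3 + (B x * b₂ - 2 * B' x ^ 2) / B x ^ 3) x := by
  have hAx := hA.self_of_nhds
  have hBx := hB.self_of_nhds
  have hderiv : deriv (fun y => (A y)⁻¹ - (B y)⁻¹) =ᶠ[𝓝 x]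
      fun y => -A' y / A y ^ 2 + B' y / B y ^ 2 := by
    filter_upwards [hA, hB, hAx.continuousAt.eventually_ne hA0,
      hBx.continuousAt.eventually_ne hB0] with y hAy hBy hAy0 hBy0
    exact (hasDerivAt_inv_sub_inv hAy hBy hAy0 hBy0).deriv
  refine HasDerivAt.congr_of_eventuallyEq ?_ hderiv
  refine ((hA'.fun_neg.div (hAx.fun_pow 2) (pow_ne_zero 2 hA0)).add
    (hB'.div (hBx.fun_pow 2) (pow_ne_zero 2 hB0))).congr_deriv ?_
  field_simp
  ring

theorem inv_sub_inv_second_deriv_neg {A B a₁ b₁ a₂ b₂ : ℝ} (hA : A ≠ 0) (hB : B ≠ 0)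
    (hAB : A < B) (hstat : -a₁ / A ^ 2 + b₁ / B ^ 2 = 0) (ha₂ : 0 ≤ a₂) (hb₂ : b₂ < 0) :
    (2 * a₁ ^ 2 - A * a₂) / A ^ 3 + (B * b₂ - 2 * b₁ ^ 2) / B ^ 3 < 0 := by
  set s := b₁ / B ^ 2
  have ha₁ : a₁ = s * A ^ 2 := by field_simp at hstat ⊢; linarith
  have hb₁ : b₁ = s * B ^ 2 := by simp only [s]; field_simp
  have hsplit : (2 * a₁ ^ 2 - A * a₂) / A ^ 3 + (B * b₂ - 2 * b₁ ^ 2) / B ^ 3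
      = -(a₂ / A ^ 2) + b₂ / B ^ 2 + 2 * s ^ 2 * (A - B) := by
    rw [ha₁, hb₁]; field_simp; ring
  rw [hsplit]
  have : 0 ≤ a₂ / A ^ 2 := by positivity
  have : b₂ / B ^ 2 < 0 := div_neg_of_neg_of_pos hb₂ (by positivity)
  nlinarith [sq_nonneg s]

end InvSubInv

theorem one_sub_sq_sqrt_sub_sqrt_eq {ρ z : ℝ} (hρ : ρ ^ 2 ≤ 1) (hz0 : 0 ≤ z) (hz1 : z ≤ 1) :
    1 - (ρ * √(1 - z) - √((1 - ρ ^ 2) * z)) ^ 2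
      = 1 - ρ ^ 2 + (2 * ρ ^ 2 - 1) * z + 2 * ρ * √(1 - ρ ^ 2) * √(z * (1 - z)) := by
  rw [Real.sqrt_mul (sub_nonneg.2 hρ), Real.sqrt_mul hz0]
  have hp := Real.sq_sqrt (sub_nonneg.2 hz1)
  have hq := Real.sq_sqrt hz0
  have hr := Real.sq_sqrt (sub_nonneg.2 hρ)
  linear_combination (-ρ ^ 2) * hp - √(1 - ρ ^ 2) ^ 2 * hq - z * hr

theorem hasDerivAt_sqrt_mul_one_sub_s19 {z : ℝ} (hz0 : 0 < z) (hz1 : z < 1) :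
    HasDerivAt (fun y => √(y * (1 - y))) ((1 - 2 * z) / (2 * √(z * (1 - z)))) z := by
  have h : HasDerivAt (fun y => y * (1 - y)) (1 - 2 * z) z :=
    ((hasDerivAt_id' z).mul ((hasDerivAt_id' z).const_sub 1)).congr_deriv (by ring)
  exact h.sqrt (by nlinarith)

theorem hasDerivAt_deriv_sqrt_mul_one_sub {z : ℝ} (hz0 : 0 < z) (hz1 : z < 1) :
    HasDerivAt (fun y => (1 - 2 * y) / (2 * √(y * (1 - y))))
      (-1 / (4 * (z * (1 - z)) * √(z * (1 - z)))) z := by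
  have hh : 0 < z * (1 - z) := by nlinarith
  have hs : 0 < √(z * (1 - z)) := Real.sqrt_pos.2 hh
  have hs2 := Real.sq_sqrt hh.le
  have hz1' : 1 - z ≠ 0 := by linarith
  refine ((((hasDerivAt_id' z).const_mul 2).const_sub 1).div
    ((hasDerivAt_sqrt_mul_one_sub_s19 hz0 hz1).const_mul 2) (by positivity)).congr_deriv ?_
  field_simp
  linear_combination (4 - 16 * (z * (1 - z))) * hs2

theorem hasDerivAt_one_sub_sq_sqrt_sub_sqrt {ρ z : ℝ} (hρ : ρ ^ 2 ≤ 1) (hz0 : 0 < z)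
    (hz1 : z < 1) :
    HasDerivAt (fun y => 1 - (ρ * √(1 - y) - √((1 - ρ ^ 2) * y)) ^ 2)
      (2 * ρ ^ 2 - 1 + 2 * ρ * √(1 - ρ ^ 2) * ((1 - 2 * z) / (2 * √(z * (1 - z))))) z := by
  have heq : (fun y => 1 - ρ ^ 2 + (2 * ρ ^ 2 - 1) * y + 2 * ρ * √(1 - ρ ^ 2) * √(y * (1 - y)))
      =ᶠ[𝓝 z] fun y => 1 - (ρ * √(1 - y) - √((1 - ρ ^ 2) * y)) ^ 2 := by
    filter_upwards [Ioo_mem_nhds hz0 hz1] with y hy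
    exact (one_sub_sq_sqrt_sub_sqrt_eq hρ hy.1.le hy.2.le).symm
  refine HasDerivAt.congr_of_eventuallyEq ?_ heq.symm
  refine ((((hasDerivAt_id' z).const_mul _).const_add _).add
    ((hasDerivAt_sqrt_mul_one_sub_s19 hz0 hz1).const_mul _)).congr_deriv ?_
  simp

theorem stmt19_general (ρ γ α₁ α₂ α₃ α₄ : ℝ) (hρ0 : 0 < ρ) (hρ1 : ρ < 1) (hγ : 0 < γ)
    (hα₁ : 0 < α₁) (hα₂ : 0 < α₂) (hα₃ : 0 < α₃)
    (G f : ℝ → ℝ)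
    (hG : ∀ z, G z = 1 - (ρ * Real.sqrt (1 - z) - Real.sqrt ((1 - ρ ^ 2) * z)) ^ 2)
    (hf : ∀ z, f z = 1 / (γ * α₁ * z + α₂) - 1 / (γ * α₃ * G z + α₄))
    (z' : ℝ) (hz' : z' ∈ Set.Ioo (0 : ℝ) 1)
    (hstat : deriv f z' = 0)
    (hlt : γ * α₁ * z' + α₂ < γ * α₃ * G z' + α₄) :
    deriv (deriv f) z' < 0 := by
  obtain ⟨hz0, hz1⟩ := hz'
  have hρsq : ρ ^ 2 ≤ 1 := by nlinarith
  set k := 2 * ρ * √(1 - ρ ^ 2)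
  have hk : 0 < k := by have := Real.sqrt_pos.2 (show 0 < 1 - ρ ^ 2 by nlinarith); positivity
  have hf_eq : f = fun y => (γ * α₁ * y + α₂)⁻¹ - (γ * α₃ * G y + α₄)⁻¹ := by
    funext y; simp only [hf, one_div]
  have hA (y : ℝ) : HasDerivAt (fun y => γ * α₁ * y + α₂) (γ * α₁) y :=
    ((hasDerivAt_id' y).const_mul _).add_const _ |>.congr_deriv (mul_one _)
  have hB : ∀ᶠ y in 𝓝 z', HasDerivAt (fun y => γ * α₃ * G y + α₄)
      (γ * α₃ * (2 * ρ ^ 2 - 1 + k * ((1 - 2 * y) / (2 * √(y * (1 - y)))))) y := by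
    filter_upwards [Ioo_mem_nhds hz0 hz1] with y hy
    rw [funext hG]
    exact ((hasDerivAt_one_sub_sq_sqrt_sub_sqrt hρsq hy.1 hy.2).const_mul _).add_const _
  have hB' := (((hasDerivAt_deriv_sqrt_mul_one_sub hz0 hz1).const_mul k).const_add
    (2 * ρ ^ 2 - 1)).const_mul (γ * α₃)
  have hB'_neg : γ * α₃ * (k * (-1 / (4 * (z' * (1 - z')) * √(z' * (1 - z'))))) < 0 := by
    have : 0 < z' * (1 - z') := by nlinarith
    have : 0 < √(z' * (1 - z')) := Real.sqrt_pos.2 this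
    exact mul_neg_of_pos_of_neg (by positivity)
      (mul_neg_of_pos_of_neg hk (div_neg_of_neg_of_pos (by norm_num) (by positivity)))
  have hA0 : 0 < γ * α₁ * z' + α₂ := by positivity
  have hB0 : γ * α₃ * G z' + α₄ ≠ 0 := (hA0.trans hlt).ne'
  rw [hf_eq, (hasDerivAt_inv_sub_inv (hA z') hB.self_of_nhds hA0.ne' hB0).deriv] at hstat
  rw [hf_eq, (hasDerivAt_deriv_inv_sub_inv (Eventually.of_forall hA) hB (hasDerivAt_const z' _)
    hB' hA0.ne' hB0).deriv]
  exact inv_sub_inv_second_deriv_neg hA0.ne' hB0 hlt hstat le_rfl hB'_neg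

/-- The reciprocal-source-power function
`f(z) = 1/(γα₁z + α₂) − 1/(γα₃G_ρ(z) + α₄)` of the cooperative-jamming total-power
minimization is strictly concave at any stationary point `z′ ∈ (0,1)` at which it is
positive (`γα₁z′ + α₂ < γα₃G_ρ(z′) + α₄`). -/
theorem stmt19 (ρ γ α₁ α₂ α₃ α₄ : ℝ) (hρ0 : 0 < ρ) (hρ1 : ρ < 1) (hγ : 0 < γ)
    (hα₁ : 0 < α₁) (hα₂ : 0 < α₂) (hα₃ : 0 < α₃) (hα₄ : 0 < α₄)
    (G f : ℝ → ℝ)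
    (hG : ∀ z, G z = 1 - (ρ * Real.sqrt (1 - z) - Real.sqrt ((1 - ρ ^ 2) * z)) ^ 2)
    (hf : ∀ z, f z = 1 / (γ * α₁ * z + α₂) - 1 / (γ * α₃ * G z + α₄))
    (z' : ℝ) (hz' : z' ∈ Set.Ioo (0 : ℝ) 1)
    (hstat : deriv f z' = 0)
    (hlt : γ * α₁ * z' + α₂ < γ * α₃ * G z' + α₄) :
    deriv (deriv f) z' < 0 :=
  stmt19_general ρ γ α₁ α₂ α₃ α₄ hρ0 hρ1 hγ hα₁ hα₂ hα₃ G f hG hf z' hz' hstat hlt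
end
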